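/- arXiv:0906.5374 — 10 statements merged into one kernel-verified Lean document; each statement's English description precedes it below -/
import Mathlib

section
/- Let F be a field of characteristic ≠ 2, let D be a quaternion algebra over F with canonical involution σ, and let c ∈ D be invertible with c ∉ F·1 and σ(c) ≠ c. In each of the algebras A = Cay(D,c), A = Cay_m(D,c) and A = Cay_r(D,c), the element l = (0,1) satisfies l·l = (c,0), l·(l·l) = (0, σ(c)) and (l·l)·l = (0, c); hence (l·l)·l ≠ l·(l·l), so A is not third-power associative (and in particular A is not a power-associative and not a quadratic algebra). -/
open Quaternion

/-- The Cayley–Dickson doubling multiplication on `D ⊕ D` with the scalar `c`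
on the left-hand side: `(u,v)(u',v') = (uu' + c(σ(v')v), v'u + vσ(u'))`. -/
def cayMul {F : Type*} [Field F] {a b : F} (c : ℍ[F,a,b])
    (x y : ℍ[F,a,b] × ℍ[F,a,b]) : ℍ[F,a,b] × ℍ[F,a,b] :=
  (x.1 * y.1 + c * (star y.2 * x.2), y.2 * x.1 + x.2 * star y.1)

/-- The Cayley–Dickson doubling multiplication with the scalar `c` in the middle:
`(u,v)(u',v') = (uu' + σ(v')(cv), v'u + vσ(u'))`. -/
def caymMul {F : Type*} [Field F] {a b : F} (c : ℍ[F,a,b])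
    (x y : ℍ[F,a,b] × ℍ[F,a,b]) : ℍ[F,a,b] × ℍ[F,a,b] :=
  (x.1 * y.1 + star y.2 * (c * x.2), y.2 * x.1 + x.2 * star y.1)

/-- The Cayley–Dickson doubling multiplication with the scalar `c` on the right-hand
side: `(u,v)(u',v') = (uu' + (σ(v')v)c, v'u + vσ(u'))`. -/
def cayrMul {F : Type*} [Field F] {a b : F} (c : ℍ[F,a,b])
    (x y : ℍ[F,a,b] × ℍ[F,a,b]) : ℍ[F,a,b] × ℍ[F,a,b] :=
  (x.1 * y.1 + (star y.2 * x.2) * c, y.2 * x.1 + x.2 * star y.1)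


section DoublingPowers

variable {A : Type*} [Zero A] [One A] [Star A]

theorem doubling_cube_of_mul_eq {c : A} (mul : A × A → A × A → A × A)
    (hsq : mul (0, 1) (0, 1) = (c, 0)) (hleft : ∀ u, mul (0, 1) (u, 0) = (0, star u))
    (hright : ∀ u, mul (u, 0) (0, 1) = (0, u)) (hcs : star c ≠ c) :
    mul (0, 1) (0, 1) = (c, 0) ∧
    mul (0, 1) (mul (0, 1) (0, 1)) = (0, star c) ∧
    mul (mul (0, 1) (0, 1)) (0, 1) = (0, c) ∧
    mul (mul (0, 1) (0, 1)) (0, 1) ≠ mul (0, 1) (mul (0, 1) (0, 1)) := by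
  rw [hsq, hleft, hright]
  exact ⟨rfl, rfl, rfl, fun h => hcs (congrArg Prod.snd h).symm⟩

end DoublingPowers

section DicksonMul

variable {F : Type*} [Field F] {a b : F} (c u : ℍ[F,a,b])

@[simp] theorem cayMul_zero_one_zero_one : cayMul c (0, 1) (0, 1) = (c, 0) := by
  simp [cayMul]

@[simp] theorem cayMul_zero_one_left : cayMul c (0, 1) (u, 0) = (0, star u) := by
  simp [cayMul]

@[simp] theorem cayMul_zero_one_right : cayMul c (u, 0) (0, 1) = (0, u) := by
  simp [cayMul]

@[simp] theorem caymMul_zero_one_zero_one : caymMul c (0, 1) (0, 1) = (c, 0) := by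
  simp [caymMul]

@[simp] theorem caymMul_zero_one_left : caymMul c (0, 1) (u, 0) = (0, star u) := by
  simp [caymMul]

@[simp] theorem caymMul_zero_one_right : caymMul c (u, 0) (0, 1) = (0, u) := by
  simp [caymMul]

@[simp] theorem cayrMul_zero_one_zero_one : cayrMul c (0, 1) (0, 1) = (c, 0) := by
  simp [cayrMul]

@[simp] theorem cayrMul_zero_one_left : cayrMul c (0, 1) (u, 0) = (0, star u) := by
  simp [cayrMul]

@[simp] theorem cayrMul_zero_one_right : cayrMul c (u, 0) (0, 1) = (0, u) := by
  simp [cayrMul]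

end DicksonMul

theorem stmt_0_general {F : Type*} [Field F] {a b : F}
    (c : ℍ[F,a,b])
    (hcs : star c ≠ c)
    (mul : (ℍ[F,a,b] × ℍ[F,a,b]) → (ℍ[F,a,b] × ℍ[F,a,b]) → ℍ[F,a,b] × ℍ[F,a,b])
    (hmul : mul = cayMul c ∨ mul = caymMul c ∨ mul = cayrMul c) :
    mul (0, 1) (0, 1) = (c, 0) ∧
    mul (0, 1) (mul (0, 1) (0, 1)) = (0, star c) ∧
    mul (mul (0, 1) (0, 1)) (0, 1) = (0, c) ∧
    mul (mul (0, 1) (0, 1)) (0, 1) ≠ mul (0, 1) (mul (0, 1) (0, 1)) := by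
  rcases hmul with rfl | rfl | rfl
  · exact doubling_cube_of_mul_eq _ (cayMul_zero_one_zero_one c) (cayMul_zero_one_left c)
      (cayMul_zero_one_right c) hcs
  · exact doubling_cube_of_mul_eq _ (caymMul_zero_one_zero_one c) (caymMul_zero_one_left c)
      (caymMul_zero_one_right c) hcs
  · exact doubling_cube_of_mul_eq _ (cayrMul_zero_one_zero_one c) (cayrMul_zero_one_left c)
      (cayrMul_zero_one_right c) hcs

/-- In each of `Cay(D,c)`, `Cay_m(D,c)`, `Cay_r(D,c)` the element `l = (0,1)` satisfies
`l·l = (c,0)`, `l·(l·l) = (0,σ(c))` and `(l·l)·l = (0,c)`; hence `(l·l)·l ≠ l·(l·l)`,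
so these algebras are not third-power associative. -/
theorem stmt_0 {F : Type*} [Field F] (hchar : (2 : F) ≠ 0) {a b : F}
    (c : ℍ[F,a,b]) (hc : IsUnit c)
    (hc1 : ∀ t : F, c ≠ algebraMap F ℍ[F,a,b] t) (hcs : star c ≠ c)
    (mul : (ℍ[F,a,b] × ℍ[F,a,b]) → (ℍ[F,a,b] × ℍ[F,a,b]) → ℍ[F,a,b] × ℍ[F,a,b])
    (hmul : mul = cayMul c ∨ mul = caymMul c ∨ mul = cayrMul c) :
    mul (0, 1) (0, 1) = (c, 0) ∧
    mul (0, 1) (mul (0, 1) (0, 1)) = (0, star c) ∧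
    mul (mul (0, 1) (0, 1)) (0, 1) = (0, c) ∧
    mul (mul (0, 1) (0, 1)) (0, 1) ≠ mul (0, 1) (mul (0, 1) (0, 1)) :=
  stmt_0_general c hcs mul hmul
end

section
/- Let F be a field of characteristic ≠ 2, let D be a quaternion division algebra over F, let c ∈ D be invertible with c ∉ F·1, and let A = Cay(D,c). Then the left nucleus {x ∈ A | (xy)z = x(yz) for all y,z ∈ A}, the middle nucleus {x ∈ A | (yx)z = y(xz) for all y,z ∈ A}, the right nucleus {x ∈ A | (yz)x = y(zx) for all y,z ∈ A}, the commuter {x ∈ A | xy = yx for all y ∈ A}, and hence the nucleus and the center of A, are all equal to F·(1,0). -/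
open Quaternion

/-!
Write `x = (p, q)`. Testing the associativity (or commutativity) identity on `(i, 0)` and
`(j, 0)` gives `q k = -q k` (resp. `q i = -q i`), so `q = 0` since `2 ≠ 0` and `D` has no zero
divisors. Further tests with `(i, 0)`, `(j, 0)` and `(0, 1)` show that `p` (or `σ p`, for the
right nucleus) commutes with `i` and `j`, hence lies in `F`. Conversely `(t, 0)` multiplies on
either side as the scalar `t`, and the multiplication is `F`-bilinear.
-/

local notation "𝐢" => QuaternionAlgebra.mk 0 1 0 0
local notation "𝐣" => QuaternionAlgebra.mk 0 0 1 0
local notation "𝐤" => QuaternionAlgebra.mk 0 0 0 1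

theorem eq_zero_of_eq_neg_of_two_ne_zero {F M : Type*} [Field F] [AddCommGroup M] [Module F M]
    (h2 : (2 : F) ≠ 0) {x : M} (h : x = -x) : x = 0 := by
  have hx : (2 : F) • x = 0 := by rw [two_smul]; nth_rewrite 2 [h]; exact add_neg_cancel x
  exact (smul_eq_zero.1 hx).resolve_left h2

theorem eq_zero_of_mul_eq_mul_neg {F A : Type*} [Field F] [Ring A] [NoZeroDivisors A] [Module F A]
    (h2 : (2 : F) ≠ 0) {q e : A} (he : e ≠ 0) (h : q * e = q * -e) : q = 0 :=
  (mul_eq_zero.1 (eq_zero_of_eq_neg_of_two_ne_zero h2 (h.trans (mul_neg q e)))).resolve_right he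

namespace QuaternionAlgebra

variable {F : Type*} [Field F] {a b : F}

theorem c₁_ne_zero_of_noZeroDivisors [NoZeroDivisors ℍ[F,a,b]] : a ≠ 0 := by
  intro ha
  have hi : (𝐢 : ℍ[F,a,b]) * 𝐢 = 0 := by ext <;> simp [ha]
  simpa using congrArg imI (mul_self_eq_zero.1 hi)

theorem exists_algebraMap_eq_of_commute (h2 : (2 : F) ≠ 0) (ha : a ≠ 0) {p : ℍ[F,a,b]}
    (hi : Commute p 𝐢) (hj : Commute p 𝐣) : ∃ t : F, p = algebraMap F _ t := by
  obtain ⟨x, y, z, w⟩ := p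
  refine ⟨x, ?_⟩
  rw [Commute, SemiconjBy, QuaternionAlgebra.ext_iff] at hi hj
  simp only [mk_mul_mk, mul_zero, mul_one, zero_add, add_zero, zero_mul, sub_zero, zero_sub,
    one_mul, true_and, sub_self] at hi hj
  obtain rfl : y = 0 := eq_zero_of_eq_neg_of_two_ne_zero h2 hj.2
  obtain rfl : z = 0 := eq_zero_of_eq_neg_of_two_ne_zero h2 hi.2.symm
  obtain rfl : w = 0 :=
    (mul_eq_zero.1 (eq_zero_of_eq_neg_of_two_ne_zero h2 hi.1.symm)).resolve_left ha
  rfl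

theorem exists_algebraMap_eq_of_commute_star (h2 : (2 : F) ≠ 0) (ha : a ≠ 0) {p : ℍ[F,a,b]}
    (hi : Commute (star p) 𝐢) (hj : Commute (star p) 𝐣) :
    ∃ t : F, p = algebraMap F _ t := by
  obtain ⟨t, ht⟩ := exists_algebraMap_eq_of_commute h2 ha hi hj
  exact ⟨t, by rw [← star_star p, ht, coe_algebraMap, star_coe]⟩

end QuaternionAlgebra

section Nuclei

variable {A : Type*} (mul : A → A → A)

def IsLeftNuclear (x : A) : Prop := ∀ y z, mul (mul x y) z = mul x (mul y z)
def IsMiddleNuclear (x : A) : Prop := ∀ y z, mul (mul y x) z = mul y (mul x z)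
def IsRightNuclear (x : A) : Prop := ∀ y z, mul (mul y z) x = mul y (mul z x)
def CommutesWithAll (x : A) : Prop := ∀ y, mul x y = mul y x

end Nuclei

namespace CayleyDickson

open QuaternionAlgebra

variable {F : Type*} [Field F] {a b : F} (c : ℍ[F,a,b])

theorem cayMul_smul_left (t : F) (x y : ℍ[F,a,b] × ℍ[F,a,b]) :
    cayMul c (t • x) y = t • cayMul c x y := by
  simp [cayMul, smul_add]

theorem cayMul_smul_right (t : F) (x y : ℍ[F,a,b] × ℍ[F,a,b]) :
    cayMul c x (t • y) = t • cayMul c x y := by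
  simp [cayMul, smul_add]

theorem cayMul_algebraMap_left (t : F) (y : ℍ[F,a,b] × ℍ[F,a,b]) :
    cayMul c (algebraMap F _ t, 0) y = t • y := by
  simp [cayMul, Prod.ext_iff, coe_mul_eq_smul, mul_coe_eq_smul]

theorem cayMul_algebraMap_right (t : F) (y : ℍ[F,a,b] × ℍ[F,a,b]) :
    cayMul c y (algebraMap F _ t, 0) = t • y := by
  simp [cayMul, Prod.ext_iff, mul_coe_eq_smul]

variable {c}

theorem isLeftNuclear_cayMul_iff (h2 : (2 : F) ≠ 0) [NoZeroDivisors ℍ[F,a,b]]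
    {x : ℍ[F,a,b] × ℍ[F,a,b]} :
    IsLeftNuclear (cayMul c) x ↔ ∃ t : F, x = (algebraMap F _ t, 0) := by
  refine ⟨fun hx => ?_, ?_⟩
  · obtain ⟨p, q⟩ := x
    have ha : a ≠ 0 := c₁_ne_zero_of_noZeroDivisors (b := b)
    obtain rfl : q = 0 :=
      eq_zero_of_mul_eq_mul_neg h2 (e := 𝐤) (by simp [QuaternionAlgebra.ext_iff]) <|
        by simpa [cayMul, star_mk, mul_assoc] using congrArg Prod.snd (hx (𝐢, 0) (𝐣, 0))
    obtain ⟨t, rfl⟩ := exists_algebraMap_eq_of_commute h2 ha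
      (by simpa [cayMul, Commute, SemiconjBy] using congrArg Prod.snd (hx (𝐢, 0) (0, 1)))
      (by simpa [cayMul, Commute, SemiconjBy] using congrArg Prod.snd (hx (𝐣, 0) (0, 1)))
    exact ⟨t, rfl⟩
  · rintro ⟨t, rfl⟩ y z
    rw [cayMul_algebraMap_left, cayMul_algebraMap_left, cayMul_smul_left]

theorem isMiddleNuclear_cayMul_iff (h2 : (2 : F) ≠ 0) [NoZeroDivisors ℍ[F,a,b]]
    {x : ℍ[F,a,b] × ℍ[F,a,b]} :
    IsMiddleNuclear (cayMul c) x ↔ ∃ t : F, x = (algebraMap F _ t, 0) := by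
  refine ⟨fun hx => ?_, ?_⟩
  · obtain ⟨p, q⟩ := x
    have ha : a ≠ 0 := c₁_ne_zero_of_noZeroDivisors (b := b)
    obtain rfl : q = 0 :=
      eq_zero_of_mul_eq_mul_neg h2 (e := 𝐤) (by simp [QuaternionAlgebra.ext_iff]) <|
        by simpa [cayMul, star_mk, mul_assoc] using (congrArg Prod.snd (hx (𝐢, 0) (𝐣, 0))).symm
    obtain ⟨t, rfl⟩ := exists_algebraMap_eq_of_commute h2 ha
      (by simpa [cayMul, Commute, SemiconjBy] using (congrArg Prod.snd (hx (𝐢, 0) (0, 1))).symm)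
      (by simpa [cayMul, Commute, SemiconjBy] using (congrArg Prod.snd (hx (𝐣, 0) (0, 1))).symm)
    exact ⟨t, rfl⟩
  · rintro ⟨t, rfl⟩ y z
    rw [cayMul_algebraMap_right, cayMul_algebraMap_left, cayMul_smul_left, cayMul_smul_right]

theorem isRightNuclear_cayMul_iff (h2 : (2 : F) ≠ 0) [NoZeroDivisors ℍ[F,a,b]]
    {x : ℍ[F,a,b] × ℍ[F,a,b]} :
    IsRightNuclear (cayMul c) x ↔ ∃ t : F, x = (algebraMap F _ t, 0) := by
  refine ⟨fun hx => ?_, ?_⟩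
  · obtain ⟨p, q⟩ := x
    have ha : a ≠ 0 := c₁_ne_zero_of_noZeroDivisors (b := b)
    obtain rfl : q = 0 :=
      eq_zero_of_mul_eq_mul_neg h2 (e := 𝐤) (by simp [QuaternionAlgebra.ext_iff]) <|
        by simpa [cayMul, star_mk, mul_assoc] using congrArg Prod.snd (hx (𝐢, 0) (𝐣, 0))
    obtain ⟨t, rfl⟩ := exists_algebraMap_eq_of_commute_star h2 ha
      (by simpa [cayMul, Commute, SemiconjBy] using (congrArg Prod.snd (hx (𝐢, 0) (0, 1))).symm)
      (by simpa [cayMul, Commute, SemiconjBy] using (congrArg Prod.snd (hx (𝐣, 0) (0, 1))).symm)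
    exact ⟨t, rfl⟩
  · rintro ⟨t, rfl⟩ y z
    rw [cayMul_algebraMap_right, cayMul_algebraMap_right, cayMul_smul_right]

theorem commutesWithAll_cayMul_iff (h2 : (2 : F) ≠ 0) [NoZeroDivisors ℍ[F,a,b]]
    {x : ℍ[F,a,b] × ℍ[F,a,b]} :
    CommutesWithAll (cayMul c) x ↔ ∃ t : F, x = (algebraMap F _ t, 0) := by
  refine ⟨fun hx => ?_, ?_⟩
  · obtain ⟨p, q⟩ := x
    have ha : a ≠ 0 := c₁_ne_zero_of_noZeroDivisors (b := b)
    obtain rfl : q = 0 :=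
      eq_zero_of_mul_eq_mul_neg h2 (e := 𝐢) (by simp [QuaternionAlgebra.ext_iff]) <|
        by simpa [cayMul, star_mk] using (congrArg Prod.snd (hx (𝐢, 0))).symm
    obtain ⟨t, rfl⟩ := exists_algebraMap_eq_of_commute h2 ha
      (by simpa [cayMul, Commute, SemiconjBy] using congrArg Prod.fst (hx (𝐢, 0)))
      (by simpa [cayMul, Commute, SemiconjBy] using congrArg Prod.fst (hx (𝐣, 0)))
    exact ⟨t, rfl⟩
  · rintro ⟨t, rfl⟩ y
    rw [cayMul_algebraMap_left, cayMul_algebraMap_right]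

end CayleyDickson

theorem stmt_1_general {F : Type*} [Field F] (hchar : (2 : F) ≠ 0) {a b : F}
    (hD : ∀ x y : ℍ[F,a,b], x * y = 0 → x = 0 ∨ y = 0)
    (c : ℍ[F,a,b]) :
    ({x : ℍ[F,a,b] × ℍ[F,a,b] | ∀ y z, cayMul c (cayMul c x y) z = cayMul c x (cayMul c y z)}
        = {x | ∃ t : F, x = (algebraMap F ℍ[F,a,b] t, 0)}) ∧
    ({x : ℍ[F,a,b] × ℍ[F,a,b] | ∀ y z, cayMul c (cayMul c y x) z = cayMul c y (cayMul c x z)}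
        = {x | ∃ t : F, x = (algebraMap F ℍ[F,a,b] t, 0)}) ∧
    ({x : ℍ[F,a,b] × ℍ[F,a,b] | ∀ y z, cayMul c (cayMul c y z) x = cayMul c y (cayMul c z x)}
        = {x | ∃ t : F, x = (algebraMap F ℍ[F,a,b] t, 0)}) ∧
    ({x : ℍ[F,a,b] × ℍ[F,a,b] | ∀ y, cayMul c x y = cayMul c y x}
        = {x | ∃ t : F, x = (algebraMap F ℍ[F,a,b] t, 0)}) ∧
    ({x : ℍ[F,a,b] × ℍ[F,a,b] |
        (∀ y z, cayMul c (cayMul c x y) z = cayMul c x (cayMul c y z)) ∧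
        (∀ y z, cayMul c (cayMul c y x) z = cayMul c y (cayMul c x z)) ∧
        (∀ y z, cayMul c (cayMul c y z) x = cayMul c y (cayMul c z x))}
        = {x | ∃ t : F, x = (algebraMap F ℍ[F,a,b] t, 0)}) ∧
    ({x : ℍ[F,a,b] × ℍ[F,a,b] |
        ((∀ y z, cayMul c (cayMul c x y) z = cayMul c x (cayMul c y z)) ∧
         (∀ y z, cayMul c (cayMul c y x) z = cayMul c y (cayMul c x z)) ∧
         (∀ y z, cayMul c (cayMul c y z) x = cayMul c y (cayMul c z x))) ∧
        (∀ y, cayMul c x y = cayMul c y x)}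
        = {x | ∃ t : F, x = (algebraMap F ℍ[F,a,b] t, 0)}) := by
  have : NoZeroDivisors ℍ[F,a,b] := ⟨hD _ _⟩
  have hL (x) := CayleyDickson.isLeftNuclear_cayMul_iff (c := c) hchar (x := x)
  have hM (x) := CayleyDickson.isMiddleNuclear_cayMul_iff (c := c) hchar (x := x)
  have hR (x) := CayleyDickson.isRightNuclear_cayMul_iff (c := c) hchar (x := x)
  have hC (x) := CayleyDickson.commutesWithAll_cayMul_iff (c := c) hchar (x := x)
  have hN (x) := ((hL x).and ((hM x).and (hR x))).trans
    ((and_congr_right' and_self_iff).trans and_self_iff)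
  exact ⟨Set.ext hL, Set.ext hM, Set.ext hR, Set.ext hC, Set.ext hN,
    Set.ext fun x => ((hN x).and (hC x)).trans and_self_iff⟩

/-- For a quaternion division algebra `D` over a field `F` of characteristic ≠ 2 and an
invertible `c ∈ D` not in `F·1`, the left, middle and right nuclei, the commuter, the
nucleus and the center of `A = Cay(D,c)` all equal `F·(1,0)`. -/
theorem stmt_1 {F : Type*} [Field F] (hchar : (2 : F) ≠ 0) {a b : F}
    (hD : ∀ x y : ℍ[F,a,b], x * y = 0 → x = 0 ∨ y = 0)
    (c : ℍ[F,a,b]) (hc : IsUnit c)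
    (hc1 : ∀ t : F, c ≠ algebraMap F ℍ[F,a,b] t) :
    ({x : ℍ[F,a,b] × ℍ[F,a,b] | ∀ y z, cayMul c (cayMul c x y) z = cayMul c x (cayMul c y z)}
        = {x | ∃ t : F, x = (algebraMap F ℍ[F,a,b] t, 0)}) ∧
    ({x : ℍ[F,a,b] × ℍ[F,a,b] | ∀ y z, cayMul c (cayMul c y x) z = cayMul c y (cayMul c x z)}
        = {x | ∃ t : F, x = (algebraMap F ℍ[F,a,b] t, 0)}) ∧
    ({x : ℍ[F,a,b] × ℍ[F,a,b] | ∀ y z, cayMul c (cayMul c y z) x = cayMul c y (cayMul c z x)}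
        = {x | ∃ t : F, x = (algebraMap F ℍ[F,a,b] t, 0)}) ∧
    ({x : ℍ[F,a,b] × ℍ[F,a,b] | ∀ y, cayMul c x y = cayMul c y x}
        = {x | ∃ t : F, x = (algebraMap F ℍ[F,a,b] t, 0)}) ∧
    ({x : ℍ[F,a,b] × ℍ[F,a,b] |
        (∀ y z, cayMul c (cayMul c x y) z = cayMul c x (cayMul c y z)) ∧
        (∀ y z, cayMul c (cayMul c y x) z = cayMul c y (cayMul c x z)) ∧
        (∀ y z, cayMul c (cayMul c y z) x = cayMul c y (cayMul c z x))}
        = {x | ∃ t : F, x = (algebraMap F ℍ[F,a,b] t, 0)}) ∧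
    ({x : ℍ[F,a,b] × ℍ[F,a,b] |
        ((∀ y z, cayMul c (cayMul c x y) z = cayMul c x (cayMul c y z)) ∧
         (∀ y z, cayMul c (cayMul c y x) z = cayMul c y (cayMul c x z)) ∧
         (∀ y z, cayMul c (cayMul c y z) x = cayMul c y (cayMul c z x))) ∧
        (∀ y, cayMul c x y = cayMul c y x)}
        = {x | ∃ t : F, x = (algebraMap F ℍ[F,a,b] t, 0)}) :=
  stmt_1_general hchar hD c
end

section
/- Let F be a field of characteristic ≠ 2, let D be a quaternion division algebra over F, let c ∈ D be invertible with c ∉ F·1, and set A = Cay(D,c). For any e, f ∈ Fˣ, if φ : (e,f)_F → A is an injective unital F-algebra homomorphism (an injective F-linear map with φ(xy) = φ(x)φ(y) and φ(1) = (1,0)), then the image of φ equals D × {0}; in particular D ≅ (e,f)_F, and D × {0} is the only quaternion subalgebra of A. -/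
open Quaternion

/-!
If `(u, v)² = (t, 0)` in `Cay(D,c)` with `v ≠ 0`, the second component gives
`v (u + σ u) = 0`, so `u` is pure and `u² = -σ(u) u` is a scalar; the first component then
makes `c σ(v) v` a scalar, and `σ(v) v` is a nonzero scalar because `D` is a division
algebra, so `c ∈ F`. Hence every element of a quaternion subalgebra whose square is a scalar,
in particular each of `1, i, j, k`, lies in `D × {0}`, and the first projection restricted
to the image is an injective algebra map between `4`-dimensional algebras.
-/

namespace QuaternionAlgebra

variable {F : Type*} [Field F]

theorem exists_basisOneIJK_mul_self_eq_algebraMap (e f : F) (i : Fin 4) :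
    ∃ t : F, basisOneIJK e 0 f i * basisOneIJK e 0 f i = algebraMap F ℍ[F,e,f] t := by
  fin_cases i
  · exact ⟨1, by ext <;> simp [basisOneIJK]⟩
  · exact ⟨e, by ext <;> simp [basisOneIJK]⟩
  · exact ⟨f, by ext <;> simp [basisOneIJK]⟩
  · exact ⟨-(e * f), by ext <;> simp [basisOneIJK]⟩

theorem star_mul_self_ne_zero {a b : F} (hD : ∀ x y : ℍ[F,a,b], x * y = 0 → x = 0 ∨ y = 0)
    {v : ℍ[F,a,b]} (hv : v ≠ 0) : star v * v ≠ 0 := fun h =>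
  (hD _ _ h).elim (fun h' => hv (star_eq_zero.mp h')) hv

end QuaternionAlgebra

section CayleyDickson

variable {F : Type*} [Field F] {a b : F} {c : ℍ[F,a,b]}

theorem snd_eq_zero_of_cayMul_self_eq_algebraMap
    (hD : ∀ x y : ℍ[F,a,b], x * y = 0 → x = 0 ∨ y = 0)
    (hc : ∀ t : F, c ≠ algebraMap F ℍ[F,a,b] t) {p : ℍ[F,a,b] × ℍ[F,a,b]} {t : F}
    (h : cayMul c p p = (algebraMap F _ t, 0)) : p.2 = 0 := by
  obtain ⟨u, v⟩ := p
  show v = 0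
  by_contra hv
  obtain ⟨hfst, hsnd⟩ := Prod.mk.inj h
  have hpure : star u = -u := by
    rw [← mul_add] at hsnd
    exact eq_neg_of_add_eq_zero_right ((hD _ _ hsnd).resolve_left hv)
  obtain ⟨n, hvn⟩ : ∃ n : F, star v * v = n := ⟨_, QuaternionAlgebra.star_mul_eq_coe v⟩
  have hn : n ≠ 0 := by
    rintro rfl
    exact QuaternionAlgebra.star_mul_self_ne_zero hD hv (by rw [hvn, QuaternionAlgebra.coe_zero])
  have hcn : c * n = ↑(t + (star u * u).re) := by
    rw [← hvn, QuaternionAlgebra.coe_add, ← QuaternionAlgebra.star_mul_eq_coe, hpure,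
      ← QuaternionAlgebra.coe_algebraMap, ← hfst]
    noncomm_ring
  apply hc ((t + (star u * u).re) * n⁻¹)
  rw [QuaternionAlgebra.coe_algebraMap, QuaternionAlgebra.coe_mul, ← hcn, mul_assoc,
    ← QuaternionAlgebra.coe_mul, mul_inv_cancel₀ hn, QuaternionAlgebra.coe_one, mul_one]

variable {e f : F} {φ : ℍ[F,e,f] →ₗ[F] ℍ[F,a,b] × ℍ[F,a,b]}

theorem snd_eq_zero_of_map_cayMul (hD : ∀ x y : ℍ[F,a,b], x * y = 0 → x = 0 ∨ y = 0)
    (hc : ∀ t : F, c ≠ algebraMap F ℍ[F,a,b] t) (hone : φ 1 = (1, 0))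
    (hmul : ∀ x y, φ (x * y) = cayMul c (φ x) (φ y)) (x : ℍ[F,e,f]) : (φ x).2 = 0 := by
  have hsnd : (LinearMap.snd F _ _).comp φ = 0 := (QuaternionAlgebra.basisOneIJK e 0 f).ext fun i => by
    obtain ⟨t, ht⟩ := QuaternionAlgebra.exists_basisOneIJK_mul_self_eq_algebraMap e f i
    refine snd_eq_zero_of_cayMul_self_eq_algebraMap hD hc (t := t) ?_
    rw [← hmul, ht, Algebra.algebraMap_eq_smul_one, map_smul, hone, Prod.smul_mk, smul_zero,
      Algebra.algebraMap_eq_smul_one]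
  exact LinearMap.congr_fun hsnd x

def cayFstAlgHom (hone : φ 1 = (1, 0)) (hmul : ∀ x y, φ (x * y) = cayMul c (φ x) (φ y))
    (hsnd : ∀ x, (φ x).2 = 0) : ℍ[F,e,f] →ₐ[F] ℍ[F,a,b] :=
  AlgHom.ofLinearMap ((LinearMap.fst F _ _).comp φ) (congrArg Prod.fst hone) fun x y => by
    simp [hmul, cayMul, hsnd]

theorem cayFstAlgHom_bijective (hinj : Function.Injective φ) (hone : φ 1 = (1, 0))
    (hmul : ∀ x y, φ (x * y) = cayMul c (φ x) (φ y)) (hsnd : ∀ x, (φ x).2 = 0) :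
    Function.Bijective (cayFstAlgHom hone hmul hsnd) := by
  have hinj' : Function.Injective (cayFstAlgHom hone hmul hsnd) := fun x y hxy =>
    hinj (Prod.ext hxy ((hsnd x).trans (hsnd y).symm))
  refine ⟨hinj', ?_⟩
  rw [← AlgHom.coe_toLinearMap, ← LinearMap.injective_iff_surjective_of_finrank_eq_finrank
    (by rw [QuaternionAlgebra.finrank_eq_four, QuaternionAlgebra.finrank_eq_four])]
  exact hinj'

end CayleyDickson

theorem stmt_3_general {F : Type*} [Field F] {a b : F}
    (hD : ∀ x y : ℍ[F,a,b], x * y = 0 → x = 0 ∨ y = 0)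
    (c : ℍ[F,a,b])
    (hc1 : ∀ t : F, c ≠ algebraMap F ℍ[F,a,b] t)
    (e f : Fˣ)
    (φ : ℍ[F,(e : F),(f : F)] →ₗ[F] ℍ[F,a,b] × ℍ[F,a,b])
    (hinj : Function.Injective φ)
    (hone : φ 1 = (1, 0))
    (hmul : ∀ x y : ℍ[F,(e : F),(f : F)], φ (x * y) = cayMul c (φ x) (φ y)) :
    Set.range φ = {p : ℍ[F,a,b] × ℍ[F,a,b] | p.2 = 0} ∧
    Nonempty (ℍ[F,(e : F),(f : F)] ≃ₐ[F] ℍ[F,a,b]) := by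
  have hsnd := snd_eq_zero_of_map_cayMul hD hc1 hone hmul
  have hbij := cayFstAlgHom_bijective hinj hone hmul hsnd
  refine ⟨Set.ext fun p => ⟨?_, fun hp => ?_⟩, ⟨AlgEquiv.ofBijective _ hbij⟩⟩
  · rintro ⟨x, rfl⟩
    exact hsnd x
  · obtain ⟨x, hx⟩ := hbij.2 p.1
    exact ⟨x, Prod.ext hx ((hsnd x).trans hp.symm)⟩

/-- If `D` is a quaternion division algebra over a field `F` of characteristic ≠ 2,
`c ∈ D` is invertible with `c ∉ F·1`, and `φ : (e,f)_F → Cay(D,c)` is an injective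
unital `F`-algebra homomorphism from a quaternion algebra `(e,f)_F`, then the image
of `φ` is `D × {0}`; in particular `(e,f)_F ≅ D`, and `D × {0}` is the only quaternion
subalgebra of `Cay(D,c)`. -/
theorem stmt_3 {F : Type*} [Field F] (hchar : (2 : F) ≠ 0) {a b : F}
    (hD : ∀ x y : ℍ[F,a,b], x * y = 0 → x = 0 ∨ y = 0)
    (c : ℍ[F,a,b]) (hc : IsUnit c)
    (hc1 : ∀ t : F, c ≠ algebraMap F ℍ[F,a,b] t)
    (e f : Fˣ)
    (φ : ℍ[F,(e : F),(f : F)] →ₗ[F] ℍ[F,a,b] × ℍ[F,a,b])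
    (hinj : Function.Injective φ)
    (hone : φ 1 = (1, 0))
    (hmul : ∀ x y : ℍ[F,(e : F),(f : F)], φ (x * y) = cayMul c (φ x) (φ y)) :
    Set.range φ = {p : ℍ[F,a,b] × ℍ[F,a,b] | p.2 = 0} ∧
    Nonempty (ℍ[F,(e : F),(f : F)] ≃ₐ[F] ℍ[F,a,b]) :=
  stmt_3_general hD c hc1 e f φ hinj hone hmul
end

section
/- Let F be a field of characteristic ≠ 2, let D be a quaternion division algebra over F, let c ∈ D be invertible with c ∉ F·1, and set A = Cay_m(D,c) or A = Cay_r(D,c). For any e, f ∈ Fˣ, if φ : (e,f)_F → A is an injective unital F-algebra homomorphism, then the image of φ equals D × {0}; in particular D ≅ (e,f)_F, and D × {0} is the only quaternion subalgebra of A. -/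
/-!
If `x ∈ (e,f)_F` has `x² ∈ F` and `φ x = (u, v)`, the second component of `φ(x)² = (x², 0)` is
`v (u + σ u)`; if `v ≠ 0` then `u` is pure, so `u² ∈ F`, and the first component makes
`σ(v) c v` (resp. `N(v) c`) a scalar, forcing `c ∈ F`. Since `1, i, j, k` have scalar squares,
`φ` lands in `D × {0}`, and its first component is an injective algebra map between
four-dimensional algebras, hence an isomorphism.
-/

open Quaternion

open Function

namespace QuaternionAlgebra

variable {F : Type*} [Field F]

theorem exists_basisOneIJK_mul_self_eq_coe (c₁ c₃ : F) (i : Fin 4) :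
    ∃ t : F, basisOneIJK c₁ 0 c₃ i * basisOneIJK c₁ 0 c₃ i = ↑t := by
  fin_cases i
  · exact ⟨1, by ext <;> simp [basisOneIJK]⟩
  · exact ⟨c₁, by ext <;> simp [basisOneIJK]⟩
  · exact ⟨c₃, by ext <;> simp [basisOneIJK]⟩
  · exact ⟨-(c₁ * c₃), by ext <;> simp [basisOneIJK]⟩

variable {c₁ c₂ c₃ : F}

theorem exists_mul_self_eq_coe_of_add_star_eq_zero {u : ℍ[F,c₁,c₂,c₃]} (h : u + star u = 0) :
    ∃ r : F, u * u = ↑r :=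
  ⟨-(star u * u).re, by
    rw [coe_neg, ← star_mul_eq_coe, eq_neg_of_add_eq_zero_right h, neg_mul, neg_neg]⟩

theorem eq_coe_of_coe_mul_eq_coe {m s : F} (hm : m ≠ 0) {c : ℍ[F,c₁,c₂,c₃]}
    (h : (m : ℍ[F,c₁,c₂,c₃]) * c = s) : c = ↑(m⁻¹ * s) := by
  rw [coe_mul, ← h, ← mul_assoc, ← coe_mul, inv_mul_cancel₀ hm, coe_one, one_mul]

variable [NoZeroDivisors ℍ[F,c₁,c₂,c₃]] {v : ℍ[F,c₁,c₂,c₃]}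

theorem re_star_mul_self_ne_zero (hv : v ≠ 0) : (star v * v).re ≠ 0 := fun h0 ↦
  mul_ne_zero (star_ne_zero.2 hv) hv <| by rw [star_mul_eq_coe, h0, coe_zero]

theorem exists_eq_coe_of_star_mul_self_mul_eq_coe (hv : v ≠ 0) {c : ℍ[F,c₁,c₂,c₃]} {s : F}
    (h : star v * v * c = ↑s) : ∃ t : F, c = ↑t := by
  rw [star_mul_eq_coe] at h
  exact ⟨_, eq_coe_of_coe_mul_eq_coe (re_star_mul_self_ne_zero hv) h⟩

theorem exists_eq_coe_of_star_mul_mul_self_eq_coe (hv : v ≠ 0) {c : ℍ[F,c₁,c₂,c₃]} {s : F}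
    (h : star v * (c * v) = ↑s) : ∃ t : F, c = ↑t := by
  set m := (star v * v).re
  have hvv : v * star v = ↑m := by rw [← star_comm_self', star_mul_eq_coe]
  -- multiplying `h` on the left by `v` gives `(m c - s) v = 0`
  have hzero : ((m : ℍ[F,c₁,c₂,c₃]) * c - s) * v = 0 := by
    rw [sub_mul, ← hvv, mul_assoc, mul_assoc, h, ← coe_commutes, sub_self]
  exact ⟨_, eq_coe_of_coe_mul_eq_coe (re_star_mul_self_ne_zero hv)
    (sub_eq_zero.1 ((mul_eq_zero.1 hzero).resolve_right hv))⟩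

end QuaternionAlgebra

open QuaternionAlgebra

section CayleyDickson

variable {F : Type*} [Field F] {a b : F} {c : ℍ[F,a,b]}
  {mul : (ℍ[F,a,b] × ℍ[F,a,b]) → (ℍ[F,a,b] × ℍ[F,a,b]) → ℍ[F,a,b] × ℍ[F,a,b]}

theorem fst_mul_of_snd_eq_zero (hmul : mul = caymMul c ∨ mul = cayrMul c)
    {p q : ℍ[F,a,b] × ℍ[F,a,b]} (hp : p.2 = 0) (hq : q.2 = 0) : (mul p q).1 = p.1 * q.1 := by
  rcases hmul with rfl | rfl <;> simp [caymMul, cayrMul, hp, hq]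

variable [NoZeroDivisors ℍ[F,a,b]]

theorem snd_eq_zero_of_caymMul_self_eq_coe (hc : ∀ t : F, c ≠ algebraMap F ℍ[F,a,b] t)
    {p : ℍ[F,a,b] × ℍ[F,a,b]} {t : F} (h : caymMul c p p = (↑t, 0)) : p.2 = 0 := by
  by_contra hv
  have hsnd : p.2 * (p.1 + star p.1) = 0 := by rw [mul_add]; exact congrArg Prod.snd h
  obtain ⟨r, hr⟩ :=
    exists_mul_self_eq_coe_of_add_star_eq_zero ((mul_eq_zero.1 hsnd).resolve_left hv)
  have hfst : star p.2 * (c * p.2) = ↑(t - r) := by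
    rw [coe_sub, ← hr]
    exact eq_sub_of_add_eq' (congrArg Prod.fst h)
  obtain ⟨s, rfl⟩ := exists_eq_coe_of_star_mul_mul_self_eq_coe hv hfst
  exact hc s rfl

theorem snd_eq_zero_of_cayrMul_self_eq_coe (hc : ∀ t : F, c ≠ algebraMap F ℍ[F,a,b] t)
    {p : ℍ[F,a,b] × ℍ[F,a,b]} {t : F} (h : cayrMul c p p = (↑t, 0)) : p.2 = 0 := by
  by_contra hv
  have hsnd : p.2 * (p.1 + star p.1) = 0 := by rw [mul_add]; exact congrArg Prod.snd h
  obtain ⟨r, hr⟩ :=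
    exists_mul_self_eq_coe_of_add_star_eq_zero ((mul_eq_zero.1 hsnd).resolve_left hv)
  have hfst : star p.2 * p.2 * c = ↑(t - r) := by
    rw [coe_sub, ← hr]
    exact eq_sub_of_add_eq' (congrArg Prod.fst h)
  obtain ⟨s, rfl⟩ := exists_eq_coe_of_star_mul_self_mul_eq_coe hv hfst
  exact hc s rfl

theorem snd_eq_zero_of_mul_self_eq_coe (hmul : mul = caymMul c ∨ mul = cayrMul c)
    (hc : ∀ t : F, c ≠ algebraMap F ℍ[F,a,b] t)
    {p : ℍ[F,a,b] × ℍ[F,a,b]} {t : F} (h : mul p p = (↑t, 0)) : p.2 = 0 := by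
  rcases hmul with rfl | rfl
  exacts [snd_eq_zero_of_caymMul_self_eq_coe hc h, snd_eq_zero_of_cayrMul_self_eq_coe hc h]

end CayleyDickson

section Embedding

variable {F : Type*} [Field F] {c₁ c₂ c₃ d₁ d₂ d₃ : F}
  {φ : ℍ[F,c₁,c₂,c₃] →ₗ[F] ℍ[F,d₁,d₂,d₃] × ℍ[F,d₁,d₂,d₃]}

theorem bijective_fst_comp_of_snd_eq_zero (hinj : Injective φ) (hsnd : ∀ x, (φ x).2 = 0) :
    Bijective (LinearMap.fst F _ _ ∘ₗ φ) := by
  have hinj' : Injective (LinearMap.fst F _ _ ∘ₗ φ) := fun x y h ↦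
    hinj (Prod.ext h ((hsnd x).trans (hsnd y).symm))
  refine ⟨hinj', ?_⟩
  rwa [← LinearMap.injective_iff_surjective_of_finrank_eq_finrank
    (by rw [finrank_eq_four, finrank_eq_four])]

theorem range_eq_setOf_snd_eq_zero (hinj : Injective φ) (hsnd : ∀ x, (φ x).2 = 0) :
    Set.range φ = {p | p.2 = 0} := by
  refine Set.Subset.antisymm (Set.range_subset_iff.2 hsnd) fun p hp ↦ ?_
  obtain ⟨x, hx⟩ := (bijective_fst_comp_of_snd_eq_zero hinj hsnd).2 p.1
  exact ⟨x, Prod.ext hx ((hsnd x).trans hp.symm)⟩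

end Embedding

theorem stmt_4_general {F : Type*} [Field F] {a b : F}
    (hD : ∀ x y : ℍ[F,a,b], x * y = 0 → x = 0 ∨ y = 0)
    (c : ℍ[F,a,b])
    (hc1 : ∀ t : F, c ≠ algebraMap F ℍ[F,a,b] t)
    (mul : (ℍ[F,a,b] × ℍ[F,a,b]) → (ℍ[F,a,b] × ℍ[F,a,b]) → ℍ[F,a,b] × ℍ[F,a,b])
    (hAmul : mul = caymMul c ∨ mul = cayrMul c)
    (e f : Fˣ)
    (φ : ℍ[F,(e : F),(f : F)] →ₗ[F] ℍ[F,a,b] × ℍ[F,a,b])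
    (hinj : Function.Injective φ)
    (hone : φ 1 = (1, 0))
    (hmul : ∀ x y : ℍ[F,(e : F),(f : F)], φ (x * y) = mul (φ x) (φ y)) :
    Set.range φ = {p : ℍ[F,a,b] × ℍ[F,a,b] | p.2 = 0} ∧
    Nonempty (ℍ[F,(e : F),(f : F)] ≃ₐ[F] ℍ[F,a,b]) := by
  have : NoZeroDivisors ℍ[F,a,b] := ⟨fun h ↦ hD _ _ h⟩
  have hcoe (t : F) : φ t = (↑t, 0) := by
    rw [← coe_algebraMap, Algebra.algebraMap_eq_smul_one, map_smul, hone, Prod.smul_mk,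
      smul_zero, ← Algebra.algebraMap_eq_smul_one]
    rfl
  have hsnd : ∀ x, (φ x).2 = 0 := by
    have : LinearMap.snd F _ _ ∘ₗ φ = 0 := (basisOneIJK _ _ _).ext fun i ↦ by
      obtain ⟨t, ht⟩ := exists_basisOneIJK_mul_self_eq_coe (e : F) f i
      exact snd_eq_zero_of_mul_self_eq_coe hAmul hc1 (by rw [← hmul, ht, hcoe])
    exact fun x ↦ LinearMap.congr_fun this x
  refine ⟨range_eq_setOf_snd_eq_zero hinj hsnd, ⟨AlgEquiv.ofBijective
    (AlgHom.ofLinearMap (LinearMap.fst F _ _ ∘ₗ φ) (by simp [hone]) fun x y ↦ ?_)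
    (bijective_fst_comp_of_snd_eq_zero hinj hsnd)⟩⟩
  simp only [LinearMap.comp_apply, LinearMap.fst_apply, hmul]
  exact fst_mul_of_snd_eq_zero hAmul (hsnd x) (hsnd y)

/-- If `D` is a quaternion division algebra over a field `F` of characteristic ≠ 2,
`c ∈ D` is invertible with `c ∉ F·1`, `A = Cay_m(D,c)` or `A = Cay_r(D,c)`, and
`φ : (e,f)_F → A` is an injective unital `F`-algebra homomorphism from a quaternion
algebra `(e,f)_F`, then the image of `φ` is `D × {0}`; in particular `(e,f)_F ≅ D`,
and `D × {0}` is the only quaternion subalgebra of `A`. -/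
theorem stmt_4 {F : Type*} [Field F] (hchar : (2 : F) ≠ 0) {a b : F}
    (hD : ∀ x y : ℍ[F,a,b], x * y = 0 → x = 0 ∨ y = 0)
    (c : ℍ[F,a,b]) (hc : IsUnit c)
    (hc1 : ∀ t : F, c ≠ algebraMap F ℍ[F,a,b] t)
    (mul : (ℍ[F,a,b] × ℍ[F,a,b]) → (ℍ[F,a,b] × ℍ[F,a,b]) → ℍ[F,a,b] × ℍ[F,a,b])
    (hAmul : mul = caymMul c ∨ mul = cayrMul c)
    (e f : Fˣ)
    (φ : ℍ[F,(e : F),(f : F)] →ₗ[F] ℍ[F,a,b] × ℍ[F,a,b])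
    (hinj : Function.Injective φ)
    (hone : φ 1 = (1, 0))
    (hmul : ∀ x y : ℍ[F,(e : F),(f : F)], φ (x * y) = mul (φ x) (φ y)) :
    Set.range φ = {p : ℍ[F,a,b] × ℍ[F,a,b] | p.2 = 0} ∧
    Nonempty (ℍ[F,(e : F),(f : F)] ≃ₐ[F] ℍ[F,a,b]) :=
  stmt_4_general hD c hc1 mul hAmul e f φ hinj hone hmul
end

section
/- Let F be a field of characteristic ≠ 2, let D be a quaternion division algebra over F, and let c ∈ D be invertible with c ∉ F·1. Then each of the three Dickson algebras Cay(D,c), Cay_m(D,c) and Cay_r(D,c) is a division algebra, i.e., it has no zero divisors: if (u,v)(u',v') = (0,0) then (u,v) = (0,0) or (u',v') = (0,0). -/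
open Quaternion

/-!
All three products are `(u,v)(u',v') = (uu' + E(σ(v'), v), v'u + vσ(u'))` for a twist `E`.
If `v = 0` or `v' = 0` the second component and the absence of zero divisors in `D` finish at
once. Otherwise, multiplying the first component on the right by `σ(v)` and eliminating `u'`
with the second gives `E(σ(v'), v) σ(v) = N(u) σ(v')`; for each twist, cancelling `σ(v')` and
using that `N(v) = vσ(v)` is a nonzero scalar turns this into `s c = r` with `r, s ∈ F`, `s ≠ 0`,
i.e. `c ∈ F·1`.
-/

namespace QuaternionAlgebra

variable {R : Type*} [Field R] {c₁ c₂ c₃ : R}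

/-- `cayMul`, `caymMul` and `cayrMul` are the twists `E w v = c(wv)`, `w(cv)` and `(wv)c`. -/
def dicksonMul (E : ℍ[R,c₁,c₂,c₃] → ℍ[R,c₁,c₂,c₃] → ℍ[R,c₁,c₂,c₃])
    (x y : ℍ[R,c₁,c₂,c₃] × ℍ[R,c₁,c₂,c₃]) : ℍ[R,c₁,c₂,c₃] × ℍ[R,c₁,c₂,c₃] :=
  (x.1 * y.1 + E (star y.2) x.2, y.2 * x.1 + x.2 * star y.1)

theorem coe_mul_ne_coe {c : ℍ[R,c₁,c₂,c₃]} (hc : ∀ t : R, c ≠ algebraMap R ℍ[R,c₁,c₂,c₃] t)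
    {s : R} (hs : s ≠ 0) (r : R) : (s : ℍ[R,c₁,c₂,c₃]) * c ≠ r := by
  intro h
  apply hc (r / s)
  calc c = (s⁻¹ * s) • c := by rw [inv_mul_cancel₀ hs, one_smul]
    _ = s⁻¹ • ((s : ℍ[R,c₁,c₂,c₃]) * c) := by rw [mul_smul, coe_mul_eq_smul]
    _ = algebraMap R ℍ[R,c₁,c₂,c₃] (r / s) := by rw [h, smul_coe, div_eq_inv_mul, coe_algebraMap]

theorem twist_mul_star_eq_of_dicksonMul_eq_zero {E : ℍ[R,c₁,c₂,c₃] → ℍ[R,c₁,c₂,c₃] → ℍ[R,c₁,c₂,c₃]}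
    {u v u' v' : ℍ[R,c₁,c₂,c₃]} (h : dicksonMul E (u, v) (u', v') = 0) :
    E (star v') v * star v = (u * star u).re * star v' := by
  obtain ⟨h₁, h₂⟩ := Prod.mk_eq_zero.mp h
  have h₂' : u' * star v = -(star u * star v') := by
    have := congrArg star h₂
    simp only [star_add, star_mul, star_star, star_zero] at this
    exact eq_neg_of_add_eq_zero_right this
  calc E (star v') v * star v = -(u * (u' * star v)) := by
        rw [eq_neg_of_add_eq_zero_right h₁]; noncomm_ring
    _ = u * star u * star v' := by rw [h₂']; noncomm_ring
    _ = (u * star u).re * star v' := by rw [← mul_star_eq_coe]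

variable [NoZeroDivisors ℍ[R,c₁,c₂,c₃]]

theorem re_mul_star_ne_zero {x : ℍ[R,c₁,c₂,c₃]} (hx : x ≠ 0) : (x * star x).re ≠ 0 := by
  intro h
  have : x * star x = 0 := by rw [mul_star_eq_coe, h, coe_zero]
  exact hx (by simpa using this)

theorem eq_zero_or_eq_zero_of_dicksonMul_eq_zero
    {E : ℍ[R,c₁,c₂,c₃] → ℍ[R,c₁,c₂,c₃] → ℍ[R,c₁,c₂,c₃]} (hE₀ : ∀ w, E w 0 = 0)
    (hE : ∀ v v' : ℍ[R,c₁,c₂,c₃], ∀ r : R, v ≠ 0 → v' ≠ 0 → E (star v') v * star v ≠ r * star v')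
    {x y : ℍ[R,c₁,c₂,c₃] × ℍ[R,c₁,c₂,c₃]} (h : dicksonMul E x y = 0) : x = 0 ∨ y = 0 := by
  obtain ⟨u, v⟩ := x
  obtain ⟨u', v'⟩ := y
  have key := twist_mul_star_eq_of_dicksonMul_eq_zero h
  obtain ⟨h₁, h₂⟩ := Prod.mk_eq_zero.mp h
  rcases eq_or_ne v 0 with rfl | hv
  · rcases eq_or_ne u 0 with rfl | hu
    · exact .inl rfl
    · simp only [hE₀, zero_mul, add_zero, mul_eq_zero, hu, or_false, false_or] at h₁ h₂
      simp [h₁, h₂]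
  rcases eq_or_ne v' 0 with rfl | hv'
  · simp only [zero_mul, zero_add, mul_eq_zero, hv, false_or, star_eq_zero] at h₂
    simp [h₂]
  -- this also rules out `u = 0`, as the case `r = 0` of `hE`
  exact (hE v v' _ hv hv' key).elim

section Dickson

variable {F : Type*} [Field F] {a b : F} [NoZeroDivisors ℍ[F,a,b]] {c : ℍ[F,a,b]}

theorem eq_zero_or_eq_zero_of_cayMul_eq_zero (hc : ∀ t : F, c ≠ algebraMap F ℍ[F,a,b] t)
    {x y : ℍ[F,a,b] × ℍ[F,a,b]} (h : cayMul c x y = 0) : x = 0 ∨ y = 0 := by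
  refine eq_zero_or_eq_zero_of_dicksonMul_eq_zero (E := fun w v => c * (w * v)) (by simp) ?_ h
  intro v v' r hv hv' h
  set N := (v * star v).re
  have hN : v * star v = N := mul_star_eq_coe v
  have : N * c * star v' = r * star v' := by
    rw [← h, mul_assoc, coe_commutes, ← hN]
    noncomm_ring
  exact coe_mul_ne_coe hc (re_mul_star_ne_zero hv) r
    (mul_right_cancel₀ (star_ne_zero.mpr hv') this)

theorem eq_zero_or_eq_zero_of_caymMul_eq_zero (hc : ∀ t : F, c ≠ algebraMap F ℍ[F,a,b] t)
    {x y : ℍ[F,a,b] × ℍ[F,a,b]} (h : caymMul c x y = 0) : x = 0 ∨ y = 0 := by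
  refine eq_zero_or_eq_zero_of_dicksonMul_eq_zero (E := fun w v => w * (c * v)) (by simp) ?_ h
  intro v v' r hv hv' h
  set N := (v * star v).re
  have hN : v * star v = N := mul_star_eq_coe v
  have : star v' * (N * c) = star v' * r := by
    rw [← coe_commutes r, ← h, coe_commutes N c, ← hN]
    noncomm_ring
  exact coe_mul_ne_coe hc (re_mul_star_ne_zero hv) r
    (mul_left_cancel₀ (star_ne_zero.mpr hv') this)

/-- Here cancelling `σ(v')` only gives `v c σ(v) = r`; conjugating by `v` then isolates `c`. -/
theorem eq_zero_or_eq_zero_of_cayrMul_eq_zero (hc : ∀ t : F, c ≠ algebraMap F ℍ[F,a,b] t)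
    {x y : ℍ[F,a,b] × ℍ[F,a,b]} (h : cayrMul c x y = 0) : x = 0 ∨ y = 0 := by
  refine eq_zero_or_eq_zero_of_dicksonMul_eq_zero (E := fun w v => w * v * c) (by simp) ?_ h
  intro v v' r hv hv' h
  set N := (v * star v).re
  have hN : v * star v = N := mul_star_eq_coe v
  have hN' : star v * v = N := by rw [star_comm_self', hN]
  have hr : v * c * star v = r := by
    refine mul_left_cancel₀ (star_ne_zero.mpr hv') ?_
    rw [← coe_commutes, ← h]
    noncomm_ring
  have : ((N * N : F) : ℍ[F,a,b]) * c = (r * N : F) := by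
    calc ((N * N : F) : ℍ[F,a,b]) * c = star v * v * c * (star v * v) := by
          rw [hN', coe_mul, mul_assoc, mul_assoc, coe_commutes N c]
      _ = star v * (v * c * star v) * v := by noncomm_ring
      _ = (r * N : F) := by rw [hr, ← coe_commutes r, mul_assoc, hN', ← coe_mul]
  have hN0 := re_mul_star_ne_zero hv
  exact coe_mul_ne_coe hc (mul_ne_zero hN0 hN0) _ this

end Dickson

end QuaternionAlgebra

theorem stmt_6_general {F : Type*} [Field F] {a b : F}
    (hD : ∀ x y : ℍ[F,a,b], x * y = 0 → x = 0 ∨ y = 0)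
    (c : ℍ[F,a,b])
    (hc1 : ∀ t : F, c ≠ algebraMap F ℍ[F,a,b] t) :
    (∀ x y : ℍ[F,a,b] × ℍ[F,a,b], cayMul c x y = 0 → x = 0 ∨ y = 0) ∧
    (∀ x y : ℍ[F,a,b] × ℍ[F,a,b], caymMul c x y = 0 → x = 0 ∨ y = 0) ∧
    (∀ x y : ℍ[F,a,b] × ℍ[F,a,b], cayrMul c x y = 0 → x = 0 ∨ y = 0) := by
  have : NoZeroDivisors ℍ[F,a,b] := ⟨hD _ _⟩
  exact ⟨fun _ _ => QuaternionAlgebra.eq_zero_or_eq_zero_of_cayMul_eq_zero hc1,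
    fun _ _ => QuaternionAlgebra.eq_zero_or_eq_zero_of_caymMul_eq_zero hc1,
    fun _ _ => QuaternionAlgebra.eq_zero_or_eq_zero_of_cayrMul_eq_zero hc1⟩

/-- If `D` is a quaternion division algebra over a field `F` of characteristic ≠ 2 and
`c ∈ D` is invertible with `c ∉ F·1`, then each of the Dickson algebras `Cay(D,c)`,
`Cay_m(D,c)` and `Cay_r(D,c)` has no zero divisors, i.e. is a division algebra. -/
theorem stmt_6 {F : Type*} [Field F] (hchar : (2 : F) ≠ 0) {a b : F}
    (hD : ∀ x y : ℍ[F,a,b], x * y = 0 → x = 0 ∨ y = 0)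
    (c : ℍ[F,a,b]) (hc : IsUnit c)
    (hc1 : ∀ t : F, c ≠ algebraMap F ℍ[F,a,b] t) :
    (∀ x y : ℍ[F,a,b] × ℍ[F,a,b], cayMul c x y = 0 → x = 0 ∨ y = 0) ∧
    (∀ x y : ℍ[F,a,b] × ℍ[F,a,b], caymMul c x y = 0 → x = 0 ∨ y = 0) ∧
    (∀ x y : ℍ[F,a,b] × ℍ[F,a,b], cayrMul c x y = 0 → x = 0 ∨ y = 0) :=
  stmt_6_general hD c hc1
end

section
/- Let F be a field of characteristic ≠ 2, let D and B be quaternion algebras over F, let c ∈ D be invertible with c ∉ F·1, let g : D → B be a unital F-algebra isomorphism and m ∈ Fˣ. Then the F-linear map G : D ⊕ D → B ⊕ B, G((u,v)) = (g(u), m⁻¹g(v)), is a unital F-algebra isomorphism Cay(D,c) → Cay(B, m²g(c)), and likewise an isomorphism Cay_m(D,c) → Cay_m(B, m²g(c)) and Cay_r(D,c) → Cay_r(B, m²g(c)). -/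
open Quaternion

open Function

lemma smul_eq_of_smul_sub_algebraMap_eq {F A : Type*} [Field F] [Ring A] [Algebra F A] {y : A}
    (hy : y ∉ Set.range (algebraMap F A)) {s s' r r' : F}
    (h : s • y - algebraMap F A r = s' • y - algebraMap F A r') : s = s' := by
  by_contra hne
  have hs : s - s' ≠ 0 := sub_ne_zero.mpr hne
  have hdiff : (s - s') • y = algebraMap F A (r - r') := by
    rw [sub_smul, map_sub, sub_eq_sub_iff_sub_eq_sub.mp h]
  refine hy ⟨(s - s')⁻¹ * (r - r'), ?_⟩
  rw [map_mul, ← Algebra.smul_def, ← hdiff, smul_smul, inv_mul_cancel₀ hs, one_smul]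

namespace QuaternionAlgebra

theorem mul_self_eq_smul_sub_algebraMap {R : Type*} [CommRing R] {c₁ c₂ c₃ : R}
    (x : ℍ[R,c₁,c₂,c₃]) :
    x * x = (2 * x.re + c₂ * x.imI) • x - algebraMap R _ (x * star x).re := by
  rw [coe_algebraMap, ← mul_star_eq_coe, star_eq_two_re_sub, mul_sub, mul_coe_eq_smul,
    sub_sub_cancel]

theorem map_star_of_injective {F : Type*} [Field F] {c₁ c₂ c₃ d₁ d₂ d₃ : F}
    (g : ℍ[F,c₁,c₂,c₃] →ₐ[F] ℍ[F,d₁,d₂,d₃]) (hg : Injective g) (x : ℍ[F,c₁,c₂,c₃]) :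
    g (star x) = star (g x) := by
  by_cases hx : x ∈ Set.range (algebraMap F _)
  · obtain ⟨r, rfl⟩ := hx
    rw [AlgHom.commutes]
    simp only [coe_algebraMap, star_coe]
    exact g.commutes r
  have hgx : g x ∉ Set.range (algebraMap F _) := by
    rintro ⟨r, hr⟩
    exact hx ⟨r, hg (by rw [AlgHom.commutes, hr])⟩
  have htrace : 2 * x.re + c₂ * x.imI = 2 * (g x).re + d₂ * (g x).imI := by
    have hsq := mul_self_eq_smul_sub_algebraMap (g x)
    rw [← map_mul, mul_self_eq_smul_sub_algebraMap, map_sub, map_smul, AlgHom.commutes] at hsq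
    exact smul_eq_of_smul_sub_algebraMap_eq hgx hsq
  rw [star_eq_two_re_sub, star_eq_two_re_sub, map_sub, ← coe_algebraMap, AlgHom.commutes,
    htrace, coe_algebraMap]

end QuaternionAlgebra

section Doubling

variable {F : Type*} [Field F]

section

variable {A B : Type*} [Ring A] [Ring B] [Algebra F A] [Algebra F B]

def doubleMap (g : A →ₐ[F] B) (μ : F) : A × A →ₗ[F] B × B :=
  g.toLinearMap.prodMap (μ • g.toLinearMap)

@[simp]
theorem doubleMap_apply (g : A →ₐ[F] B) (μ : F) (x : A × A) :
    doubleMap g μ x = (g x.1, μ • g x.2) :=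
  rfl

theorem doubleMap_bijective {g : A →ₐ[F] B} (hg : Bijective g) {μ : F} (hμ : μ ≠ 0) :
    Bijective (doubleMap g μ) :=
  hg.prodMap ((MulAction.bijective (Units.mk0 μ hμ)).comp hg)

end

variable {a b a' b' : F} {g : ℍ[F,a,b] →ₐ[F] ℍ[F,a',b']} {μ : F} {c : ℍ[F,a,b]}
  {c' : ℍ[F,a',b']}

theorem doubleMap_cayMul (hg : ∀ x, g (star x) = star (g x)) (hc : μ ^ 2 • c' = g c)
    (x y : ℍ[F,a,b] × ℍ[F,a,b]) :
    doubleMap g μ (cayMul c x y) = cayMul c' (doubleMap g μ x) (doubleMap g μ y) := by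
  simp only [cayMul, doubleMap_apply, map_add, map_mul, hg, ← hc, QuaternionAlgebra.star_smul,
    smul_mul_assoc, mul_smul_comm, smul_smul, smul_add, sq]

theorem doubleMap_caymMul (hg : ∀ x, g (star x) = star (g x)) (hc : μ ^ 2 • c' = g c)
    (x y : ℍ[F,a,b] × ℍ[F,a,b]) :
    doubleMap g μ (caymMul c x y) = caymMul c' (doubleMap g μ x) (doubleMap g μ y) := by
  simp only [caymMul, doubleMap_apply, map_add, map_mul, hg, ← hc, QuaternionAlgebra.star_smul,
    smul_mul_assoc, mul_smul_comm, smul_smul, smul_add, sq]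

theorem doubleMap_cayrMul (hg : ∀ x, g (star x) = star (g x)) (hc : μ ^ 2 • c' = g c)
    (x y : ℍ[F,a,b] × ℍ[F,a,b]) :
    doubleMap g μ (cayrMul c x y) = cayrMul c' (doubleMap g μ x) (doubleMap g μ y) := by
  simp only [cayrMul, doubleMap_apply, map_add, map_mul, hg, ← hc, QuaternionAlgebra.star_smul,
    smul_mul_assoc, mul_smul_comm, smul_smul, smul_add, sq]

end Doubling

theorem stmt_7_general {F : Type*} [Field F] {a b a' b' : F}
    (c : ℍ[F,a,b])
    (g : ℍ[F,a,b] ≃ₐ[F] ℍ[F,a',b']) (m : Fˣ)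
    (G : ℍ[F,a,b] × ℍ[F,a,b] → ℍ[F,a',b'] × ℍ[F,a',b'])
    (hG : G = fun x => (g x.1, ((m : F)⁻¹) • g x.2)) :
    IsLinearMap F G ∧ Function.Bijective G ∧ G (1, 0) = (1, 0) ∧
    (∀ x y, G (cayMul c x y) = cayMul (((m : F) ^ 2) • g c) (G x) (G y)) ∧
    (∀ x y, G (caymMul c x y) = caymMul (((m : F) ^ 2) • g c) (G x) (G y)) ∧
    (∀ x y, G (cayrMul c x y) = cayrMul (((m : F) ^ 2) • g c) (G x) (G y)) := by
  replace hG : G = doubleMap (g : ℍ[F,a,b] →ₐ[F] ℍ[F,a',b']) (m : F)⁻¹ := hG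
  subst hG
  have hstar := QuaternionAlgebra.map_star_of_injective (g : ℍ[F,a,b] →ₐ[F] ℍ[F,a',b']) g.injective
  have hc : ((m : F)⁻¹) ^ 2 • ((m : F) ^ 2 • g c) = g c := by
    rw [smul_smul, ← mul_pow, inv_mul_cancel₀ m.ne_zero, one_pow, one_smul]
  exact ⟨(doubleMap _ _).isLinear, doubleMap_bijective g.bijective (inv_ne_zero m.ne_zero),
    by simp, doubleMap_cayMul hstar hc, doubleMap_caymMul hstar hc, doubleMap_cayrMul hstar hc⟩

/-- If `g : D → B` is an isomorphism of quaternion algebras over `F` (char ≠ 2), `c ∈ D`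
is invertible with `c ∉ F·1` and `m ∈ Fˣ`, then `G((u,v)) = (g(u), m⁻¹g(v))` is a unital
`F`-algebra isomorphism `Cay(D,c) → Cay(B, m²g(c))`, `Cay_m(D,c) → Cay_m(B, m²g(c))`
and `Cay_r(D,c) → Cay_r(B, m²g(c))`. -/
theorem stmt_7 {F : Type*} [Field F] (hchar : (2 : F) ≠ 0) {a b a' b' : F}
    (c : ℍ[F,a,b]) (hc : IsUnit c)
    (hc1 : ∀ t : F, c ≠ algebraMap F ℍ[F,a,b] t)
    (g : ℍ[F,a,b] ≃ₐ[F] ℍ[F,a',b']) (m : Fˣ)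
    (G : ℍ[F,a,b] × ℍ[F,a,b] → ℍ[F,a',b'] × ℍ[F,a',b'])
    (hG : G = fun x => (g x.1, ((m : F)⁻¹) • g x.2)) :
    IsLinearMap F G ∧ Function.Bijective G ∧ G (1, 0) = (1, 0) ∧
    (∀ x y, G (cayMul c x y) = cayMul (((m : F) ^ 2) • g c) (G x) (G y)) ∧
    (∀ x y, G (caymMul c x y) = caymMul (((m : F) ^ 2) • g c) (G x) (G y)) ∧
    (∀ x y, G (cayrMul c x y) = cayrMul (((m : F) ^ 2) • g c) (G x) (G y)) :=
  stmt_7_general c g m G hG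
end

section
/- Let F be a field of characteristic ≠ 2 and D a quaternion division algebra over F. Let w ∈ D with w ∉ F·1 and w² = α·1 for some α ∈ Fˣ, set L = F·1 + F·w, and let c, d ∈ L with c, d ∉ F·1. Then there is no unital F-algebra isomorphism Cay(D,c) → Cay_r(D,d), no unital F-algebra isomorphism Cay_m(D,c) → Cay(D,d), and no unital F-algebra isomorphism Cay_m(D,c) → Cay_r(D,d). -/
/-!
In each of the three doublings of `D`, the left alternative elements `x` (those with
`x(xy) = (xx)y` for all `y`) are exactly those of `D × 0`, because `c ∉ F`.
Hence a unital isomorphism `G` restricts to an automorphism `φ` of `D`. Writing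
`G(0,1) = (p,s)` and comparing `G((u,0)(0,1))` with `G((0,1)(u,0))` gives `s ≠ 0`,
`φ ∘ σ = σ ∘ φ` and `σ(x)p = px` for all `x`, which forces `p = 0` in a quaternion division
algebra. So `G(0,u) = (0, sφ(u))`, and applying `G` to `(0,v)(0,u)` with `u = 1` or `v = 1`
gives `φ(c)X = N(s)·Xd` for all `X` (`N` the reduced norm), or its mirror image
`Xφ(c) = N(s)·dX`. Either way `d` is central, that is `d ∈ F`.
-/

open Quaternion

/-- Membership in the quadratic subfield `L = F·1 + F·w` of a quaternion algebra. -/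
def memL {F : Type*} [Field F] {a b : F} (w x : ℍ[F,a,b]) : Prop :=
  ∃ p q : F, x = algebraMap F ℍ[F,a,b] p + algebraMap F ℍ[F,a,b] q * w

theorem eq_zero_of_neg_eq_self {R : Type*} [CommRing R] [NoZeroDivisors R] (h2 : (2 : R) ≠ 0)
    {t : R} (ht : -t = t) : t = 0 :=
  (mul_eq_zero.1 (by linear_combination -ht : (2 : R) * t = 0)).resolve_left h2

namespace QuaternionAlgebra

section ReducedNorm

variable {R : Type*} [CommRing R] {c₁ c₂ c₃ : R}

def reducedNorm (x : ℍ[R,c₁,c₂,c₃]) : R := (star x * x).re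

theorem star_mul_self_eq_coe (x : ℍ[R,c₁,c₂,c₃]) : star x * x = reducedNorm x :=
  star_mul_eq_coe x

theorem self_mul_star_eq_coe (x : ℍ[R,c₁,c₂,c₃]) : x * star x = reducedNorm x := by
  rw [← star_comm_self', star_mul_self_eq_coe]

theorem reducedNorm_ne_zero [NoZeroDivisors ℍ[R,c₁,c₂,c₃]] {x : ℍ[R,c₁,c₂,c₃]} (hx : x ≠ 0) :
    reducedNorm x ≠ 0 := by
  intro h
  have h0 : star x * x = 0 := by rw [star_mul_self_eq_coe, h, coe_zero]
  rcases mul_eq_zero.1 h0 with h | h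
  · exact hx (star_eq_zero.1 h)
  · exact hx h

end ReducedNorm

variable {F : Type*} [Field F] {a b : F}

theorem eq_coe_re_of_star_eq_self (h2 : (2 : F) ≠ 0) {x : ℍ[F,a,b]} (hx : star x = x) :
    x = x.re := by
  have hI := congrArg imI hx
  have hJ := congrArg imJ hx
  have hK := congrArg imK hx
  simp only [imI_star, imJ_star, imK_star] at hI hJ hK
  ext <;> simp [eq_zero_of_neg_eq_self h2 hI, eq_zero_of_neg_eq_self h2 hJ,
    eq_zero_of_neg_eq_self h2 hK]

theorem eq_coe_re_of_forall_commute [NoZeroDivisors ℍ[F,a,b]] (h2 : (2 : F) ≠ 0)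
    {x : ℍ[F,a,b]} (hx : ∀ y, Commute x y) : x = x.re := by
  have ha : a ≠ 0 := by
    rintro rfl
    have : (⟨0, 1, 0, 0⟩ : ℍ[F,0,b]) * ⟨0, 1, 0, 0⟩ = 0 := by ext <;> simp
    simpa [QuaternionAlgebra.ext_iff] using mul_self_eq_zero.1 this
  have hI := congrArg imJ (hx ⟨0, 1, 0, 0⟩).eq
  have hK := congrArg imK (hx ⟨0, 1, 0, 0⟩).eq
  have hJ := congrArg imK (hx ⟨0, 0, 1, 0⟩).eq
  simp only [imJ_mul, imK_mul, mul_zero, add_zero, zero_mul, mul_one, zero_sub, zero_add,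
    sub_zero, one_mul] at hI hJ hK
  have hK' : x.imK = 0 := by
    simpa [ha] using eq_zero_of_neg_eq_self h2 hI
  ext <;> simp [hK', eq_zero_of_neg_eq_self h2 hK, eq_zero_of_neg_eq_self h2 hJ.symm]

theorem eq_zero_of_forall_star_mul_eq_mul [NoZeroDivisors ℍ[F,a,b]] (h2 : (2 : F) ≠ 0)
    {p : ℍ[F,a,b]} (hp : ∀ x, star x * p = p * x) : p = 0 := by
  set i : ℍ[F,a,b] := ⟨0, 1, 0, 0⟩
  set j : ℍ[F,a,b] := ⟨0, 0, 1, 0⟩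
  have hi : p * i = -(i * p) := by rw [← hp i, ← neg_mul]; congr 1; ext <;> simp [i]
  have hj : p * j = -(j * p) := by rw [← hp j, ← neg_mul]; congr 1; ext <;> simp [j]
  have hij : (j * i - i * j) * p = 0 := by
    have h := hp (i * j)
    have hsij : star (i * j) = j * i := by ext <;> simp [i, j]
    rw [hsij] at h
    calc (j * i - i * j) * p = p * (i * j) - i * j * p := by rw [sub_mul, h]
      _ = 0 := by rw [← mul_assoc, hi, neg_mul, mul_assoc, hj]; noncomm_ring
  have hk : j * i - i * j ≠ 0 := by
    have hk2 : j * i - i * j = ⟨0, 0, 0, -2⟩ := by ext <;> simp [i, j]; ring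
    rw [hk2]
    intro h
    exact h2 (by simpa using congrArg imK h)
  exact (mul_eq_zero.1 hij).resolve_left hk

end QuaternionAlgebra

namespace CayleyDickson

section LeftAlternative

variable {α β : Type*}

def IsLeftAlternative (M : α → α → α) (x : α) : Prop :=
  ∀ y, M x (M x y) = M (M x x) y

theorem IsLeftAlternative.map {M₁ : α → α → α} {M₂ : β → β → β} {f : α → β}
    (hf : ∀ x y, f (M₁ x y) = M₂ (f x) (f y)) (hsurj : Function.Surjective f) {x : α}
    (hx : IsLeftAlternative M₁ x) : IsLeftAlternative M₂ (f x) := by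
  intro y
  obtain ⟨y, rfl⟩ := hsurj y
  simp only [← hf, hx y]

end LeftAlternative

section ScalarMultiple

variable {K A : Type*} [Field K] [Ring A] [Algebra K A] {t : K} {e d : A}

theorem commute_of_forall_mul_eq_smul_mul_right (ht : t ≠ 0) (h : ∀ X, e * X = t • (X * d))
    (X : A) : Commute d X := by
  have he : e = t • d := by simpa using h 1
  refine smul_right_injective A ht ?_
  simpa only [he, smul_mul_assoc] using h X

theorem commute_of_forall_mul_eq_smul_mul_left (ht : t ≠ 0) (h : ∀ X, X * e = t • (d * X))
    (X : A) : Commute d X := by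
  have he : e = t • d := by simpa using h 1
  refine smul_right_injective A ht ?_
  simpa only [he, mul_smul_comm] using (h X).symm

end ScalarMultiple

section Doubling

variable {K A : Type*} [CommRing K] [Ring A] [StarRing A] [Algebra K A]

/-- `Cay(D,c)`, `Cay_m(D,c)` and `Cay_r(D,c)` are the twists `T v' v = c(σ(v')v)`, `σ(v')(cv)`
and `(σ(v')v)c`. -/
def doublingMul (T : A → A → A) (x y : A × A) : A × A :=
  (x.1 * y.1 + T y.2 x.2, y.2 * x.1 + x.2 * star y.1)

/-- The first factor `A × 0` is then intrinsic to `doublingMul T`, being its set of left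
alternative elements, so it is preserved by isomorphisms of such doublings. -/
structure IsRigidTwist (T : A → A → A) : Prop where
  zero_left : ∀ v, T 0 v = 0
  zero_right : ∀ v, T v 0 = 0
  snd_eq_zero : ∀ x, IsLeftAlternative (doublingMul T) x → x.2 = 0

variable {T T₁ T₂ : A → A → A}

theorem doublingMul_inl_left (hT : ∀ v, T v 0 = 0) (u : A) (y : A × A) :
    doublingMul T (u, 0) y = (u * y.1, y.2 * u) := by
  simp [doublingMul, hT]

theorem doublingMul_inl_right (hT : ∀ v, T 0 v = 0) (x : A × A) (u : A) :
    doublingMul T x (u, 0) = (x.1 * u, x.2 * star u) := by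
  simp [doublingMul, hT]

theorem doublingMul_inr_inr (u v : A) : doublingMul T (0, u) (0, v) = (T v u, 0) := by
  simp [doublingMul]

theorem isLeftAlternative_inl (hT : ∀ v, T v 0 = 0) (u : A) :
    IsLeftAlternative (doublingMul T) (u, 0) := by
  intro y
  simp only [doublingMul_inl_left hT, mul_assoc, zero_mul]

variable {G : (A × A) ≃ₗ[K] A × A}

theorem snd_apply_inl (h₁ : ∀ v, T₁ v 0 = 0) (h₂ : IsRigidTwist T₂)
    (hG : ∀ x y, G (doublingMul T₁ x y) = doublingMul T₂ (G x) (G y)) (u : A) :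
    (G (u, 0)).2 = 0 :=
  h₂.snd_eq_zero _ ((isLeftAlternative_inl h₁ u).map hG G.surjective)

theorem exists_apply_inl_eq (h₁ : IsRigidTwist T₁) (h₂ : ∀ v, T₂ v 0 = 0)
    (hG : ∀ x y, G (doublingMul T₁ x y) = doublingMul T₂ (G x) (G y)) (X : A) :
    ∃ u, G (u, 0) = (X, 0) := by
  have hG' : ∀ x y, G.symm (doublingMul T₂ x y) = doublingMul T₁ (G.symm x) (G.symm y) :=
    fun x y => G.symm_apply_eq.2 (by simp [hG])
  have h0 := h₁.snd_eq_zero _ ((isLeftAlternative_inl h₂ X).map hG' G.symm.surjective)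
  have hX : ((G.symm (X, 0)).1, (0 : A)) = G.symm (X, 0) := Prod.ext rfl h0.symm
  exact ⟨_, by rw [hX, G.apply_symm_apply]⟩

theorem exists_algEquiv_apply_inl (h₁ : IsRigidTwist T₁) (h₂ : IsRigidTwist T₂)
    (hG1 : G (1, 0) = (1, 0))
    (hG : ∀ x y, G (doublingMul T₁ x y) = doublingMul T₂ (G x) (G y)) :
    ∃ φ : A ≃ₐ[K] A, ∀ u, G (u, 0) = (φ u, 0) := by
  let f : A →ₗ[K] A := LinearMap.fst K A A ∘ₗ G.toLinearMap ∘ₗ LinearMap.inl K A A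
  have hf : ∀ u, G (u, 0) = (f u, 0) :=
    fun u => Prod.ext rfl (snd_apply_inl h₁.zero_right h₂ hG u)
  have hf_mul : ∀ u u', f (u * u') = f u * f u' := by
    intro u u'
    simpa [doublingMul_inl_left h₁.zero_right, doublingMul_inl_left h₂.zero_right, hf] using
      congrArg Prod.fst (hG (u, 0) (u', 0))
  let φ : A →ₐ[K] A := AlgHom.ofLinearMap f (by simp [f, hG1]) hf_mul
  refine ⟨AlgEquiv.ofBijective φ ⟨fun u u' h => ?_, fun X => ?_⟩, hf⟩
  · have h' : G (u, 0) = G (u', 0) := by rw [hf, hf]; exact congrArg (·, 0) h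
    exact congrArg Prod.fst (G.injective h')
  · obtain ⟨u, hu⟩ := exists_apply_inl_eq h₁ h₂.zero_right hG X
    exact ⟨u, congrArg Prod.fst ((hf u).symm.trans hu)⟩

theorem apply_inr (h₁ : ∀ v, T₁ v 0 = 0) (h₂ : ∀ v, T₂ v 0 = 0)
    (hG : ∀ x y, G (doublingMul T₁ x y) = doublingMul T₂ (G x) (G y))
    {φ : A → A} (hφ : ∀ u, G (u, 0) = (φ u, 0)) (u : A) :
    G (0, u) = (φ u * (G (0, 1)).1, (G (0, 1)).2 * φ u) := by
  simpa [doublingMul_inl_left h₁, doublingMul_inl_left h₂, hφ] using hG (u, 0) (0, 1)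

theorem apply_inr_star (h₁ : ∀ v, T₁ 0 v = 0) (h₂ : ∀ v, T₂ 0 v = 0)
    (hG : ∀ x y, G (doublingMul T₁ x y) = doublingMul T₂ (G x) (G y))
    {φ : A → A} (hφ : ∀ u, G (u, 0) = (φ u, 0)) (u : A) :
    G (0, star u) = ((G (0, 1)).1 * φ u, (G (0, 1)).2 * star (φ u)) := by
  simpa [doublingMul_inl_right h₁, doublingMul_inl_right h₂, hφ] using hG (0, 1) (u, 0)

theorem map_twist (hG : ∀ x y, G (doublingMul T₁ x y) = doublingMul T₂ (G x) (G y))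
    {φ : A → A} (hφ : ∀ u, G (u, 0) = (φ u, 0)) {s : A} (hs : ∀ u, G (0, u) = (0, s * φ u))
    (u v : A) : φ (T₁ u v) = T₂ (s * φ u) (s * φ v) := by
  simpa [doublingMul_inr_inr, hφ, hs] using hG (0, v) (0, u)

theorem exists_algEquiv_of_mul_equiv [NoZeroDivisors A] [Nontrivial A]
    (h₁ : IsRigidTwist T₁) (h₂ : IsRigidTwist T₂) (hG1 : G (1, 0) = (1, 0))
    (hG : ∀ x y, G (doublingMul T₁ x y) = doublingMul T₂ (G x) (G y)) :
    ∃ (φ : A ≃ₐ[K] A) (p s : A), (∀ u, G (u, 0) = (φ u, 0)) ∧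
      (∀ u, G (0, u) = (φ u * p, s * φ u)) ∧ s ≠ 0 ∧
      (∀ u, φ (star u) = star (φ u)) ∧ ∀ x, star x * p = p * x := by
  obtain ⟨φ, hφ⟩ := exists_algEquiv_apply_inl h₁ h₂ hG1 hG
  have hinr := apply_inr h₁.zero_right h₂.zero_right hG hφ
  have hinr_star := apply_inr_star h₁.zero_left h₂.zero_left hG hφ
  set p := (G (0, 1)).1
  set s := (G (0, 1)).2
  have hs : s ≠ 0 := by
    intro hs
    obtain ⟨u, hu⟩ := φ.surjective p
    have h : G (u, 0) = G (0, 1) := by rw [hφ, hu]; exact Prod.ext rfl hs.symm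
    exact one_ne_zero (congrArg Prod.snd (G.injective h)).symm
  have heq u := (hinr (star u)).symm.trans (hinr_star u)
  have hφ_star : ∀ u, φ (star u) = star (φ u) :=
    fun u => mul_left_cancel₀ hs (congrArg Prod.snd (heq u))
  refine ⟨φ, p, s, hφ, hinr, hs, hφ_star, fun x => ?_⟩
  obtain ⟨u, rfl⟩ := φ.surjective x
  simpa [hφ_star] using congrArg Prod.fst (heq u)

end Doubling

section Quaternion

variable {F : Type*} [Field F] {a b : F} [NoZeroDivisors ℍ[F,a,b]]

open QuaternionAlgebra

theorem isRigidTwist_cay (h2 : (2 : F) ≠ 0) {c : ℍ[F,a,b]}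
    (hc : ∀ t : F, c ≠ algebraMap F _ t) :
    IsRigidTwist (fun v' v : ℍ[F,a,b] => c * (star v' * v)) where
  zero_left v := by simp
  zero_right v := by simp
  snd_eq_zero := by
    rintro ⟨u, v⟩ hx
    by_contra hv
    have E : v * (star v * star c) = c * (star v * v) := by
      simpa [doublingMul] using congrArg Prod.snd (hx (0, 1))
    refine hc c.re (eq_coe_re_of_star_eq_self h2
      (smul_right_injective _ (reducedNorm_ne_zero hv) ?_))
    calc reducedNorm v • star c = v * star v * star c := by
          rw [self_mul_star_eq_coe, QuaternionAlgebra.coe_mul_eq_smul]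
      _ = reducedNorm v • c := by
          rw [mul_assoc, E, star_mul_self_eq_coe, QuaternionAlgebra.mul_coe_eq_smul]

theorem isRigidTwist_cayr (h2 : (2 : F) ≠ 0) {c : ℍ[F,a,b]}
    (hc : ∀ t : F, c ≠ algebraMap F _ t) :
    IsRigidTwist (fun v' v : ℍ[F,a,b] => star v' * v * c) where
  zero_left v := by simp
  zero_right v := by simp
  snd_eq_zero := by
    rintro ⟨u, v⟩ hx
    by_contra hv
    have E : ∀ X, X * (star v * v) * c = star v * v * c * X := fun X => by
      have h := congrArg Prod.fst (hx (X, 0))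
      simp only [doublingMul, star_zero, zero_mul, add_zero, star_mul] at h
      rw [add_mul, ← mul_assoc u u X] at h
      simpa [mul_assoc] using add_left_cancel h
    refine hc c.re (eq_coe_re_of_forall_commute h2 fun X =>
      smul_right_injective _ (reducedNorm_ne_zero hv) ?_)
    calc reducedNorm v • (c * X) = star v * v * c * X := by
          rw [star_mul_self_eq_coe, QuaternionAlgebra.coe_mul_eq_smul, smul_mul_assoc]
      _ = reducedNorm v • (X * c) := by
          rw [← E, star_mul_self_eq_coe, QuaternionAlgebra.mul_coe_eq_smul, smul_mul_assoc]

theorem isRigidTwist_caym (h2 : (2 : F) ≠ 0) {c : ℍ[F,a,b]}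
    (hc : ∀ t : F, c ≠ algebraMap F _ t) :
    IsRigidTwist (fun v' v : ℍ[F,a,b] => star v' * (c * v)) where
  zero_left v := by simp
  zero_right v := by simp
  snd_eq_zero := by
    rintro ⟨u, v⟩ hx
    by_contra hv
    obtain ⟨t, ht⟩ : ∃ t : F, star v * (c * v) = t :=
      ⟨_, eq_coe_re_of_forall_commute h2 fun X => (commute_iff_eq _ _).2 <| by
        have h := congrArg Prod.fst (hx (X, 0))
        simp only [doublingMul, star_zero, zero_mul, add_zero, star_mul] at h
        rw [add_mul, ← mul_assoc u u X] at h
        simpa [mul_assoc] using (add_left_cancel h).symm⟩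
    have hN := reducedNorm_ne_zero hv
    refine hc (t / reducedNorm v) (mul_right_cancel₀ hv ?_)
    calc c * v = (reducedNorm v)⁻¹ • (v * (star v * (c * v))) := by
          rw [← mul_assoc v, self_mul_star_eq_coe, QuaternionAlgebra.coe_mul_eq_smul,
            inv_smul_smul₀ hN]
      _ = algebraMap F _ (t / reducedNorm v) * v := by
          rw [ht, QuaternionAlgebra.mul_coe_eq_smul, smul_smul, ← Algebra.smul_def,
            div_eq_inv_mul]

theorem exists_algEquiv_map_twist (h2 : (2 : F) ≠ 0) {T₁ T₂ : ℍ[F,a,b] → ℍ[F,a,b] → ℍ[F,a,b]}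
    (h₁ : IsRigidTwist T₁) (h₂ : IsRigidTwist T₂) {G : (ℍ[F,a,b] × ℍ[F,a,b]) ≃ₗ[F] _}
    (hG1 : G (1, 0) = (1, 0))
    (hG : ∀ x y, G (doublingMul T₁ x y) = doublingMul T₂ (G x) (G y)) :
    ∃ (φ : ℍ[F,a,b] ≃ₐ[F] ℍ[F,a,b]) (s : ℍ[F,a,b]), s ≠ 0 ∧
      (∀ u, φ (star u) = star (φ u)) ∧ ∀ u v, φ (T₁ u v) = T₂ (s * φ u) (s * φ v) := by
  obtain ⟨φ, p, s, hφ, hinr, hs, hφ_star, hp⟩ := exists_algEquiv_of_mul_equiv h₁ h₂ hG1 hG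
  have hp0 : p = 0 := eq_zero_of_forall_star_mul_eq_mul h2 hp
  exact ⟨φ, s, hs, hφ_star, map_twist hG hφ fun u => by simpa [hp0] using hinr u⟩

theorem not_exists_mul_equiv_cayr (h2 : (2 : F) ≠ 0) {T : ℍ[F,a,b] → ℍ[F,a,b] → ℍ[F,a,b]}
    (hT : IsRigidTwist T) {c d : ℍ[F,a,b]} (hTc : ∀ v, T 1 v = c * v)
    (hd : ∀ t : F, d ≠ algebraMap F _ t) :
    ¬∃ G : (ℍ[F,a,b] × ℍ[F,a,b]) ≃ₗ[F] ℍ[F,a,b] × ℍ[F,a,b],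
        G (1, 0) = (1, 0) ∧ ∀ x y, G (doublingMul T x y) = cayrMul d (G x) (G y) := by
  rintro ⟨G, hG1, hG⟩
  obtain ⟨φ, s, hs, -, hφ⟩ := exists_algEquiv_map_twist h2 hT (isRigidTwist_cayr h2 hd) hG1 hG
  have key : ∀ X, φ c * X = reducedNorm s • (X * d) := fun X => by
    obtain ⟨v, rfl⟩ := φ.surjective X
    rw [← map_mul, ← hTc, hφ, map_one, mul_one, ← mul_assoc, star_mul_self_eq_coe,
      QuaternionAlgebra.coe_mul_eq_smul, smul_mul_assoc]
  exact hd _ (eq_coe_re_of_forall_commute h2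
    (commute_of_forall_mul_eq_smul_mul_right (reducedNorm_ne_zero hs) key))

theorem not_exists_mul_equiv_cay (h2 : (2 : F) ≠ 0) {T : ℍ[F,a,b] → ℍ[F,a,b] → ℍ[F,a,b]}
    (hT : IsRigidTwist T) {c d : ℍ[F,a,b]} (hTc : ∀ u, T u 1 = star u * c)
    (hd : ∀ t : F, d ≠ algebraMap F _ t) :
    ¬∃ G : (ℍ[F,a,b] × ℍ[F,a,b]) ≃ₗ[F] ℍ[F,a,b] × ℍ[F,a,b],
        G (1, 0) = (1, 0) ∧ ∀ x y, G (doublingMul T x y) = cayMul d (G x) (G y) := by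
  rintro ⟨G, hG1, hG⟩
  obtain ⟨φ, s, hs, hφ_star, hφ⟩ :=
    exists_algEquiv_map_twist h2 hT (isRigidTwist_cay h2 hd) hG1 hG
  have key : ∀ Y, Y * φ c = reducedNorm s • (d * Y) := fun Y => by
    obtain ⟨u, hu⟩ := φ.surjective (star Y)
    rw [← star_star Y, ← hu, ← hφ_star, ← map_mul, ← hTc, hφ, map_one, mul_one, star_mul,
      mul_assoc, star_mul_self_eq_coe, ← mul_assoc, QuaternionAlgebra.mul_coe_eq_smul,
      hφ_star]
  exact hd _ (eq_coe_re_of_forall_commute h2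
    (commute_of_forall_mul_eq_smul_mul_left (reducedNorm_ne_zero hs) key))

end Quaternion

end CayleyDickson

open CayleyDickson in
theorem stmt_13_general {F : Type*} [Field F] (hchar : (2 : F) ≠ 0) {a b : F}
    (hD : ∀ x y : ℍ[F,a,b], x * y = 0 → x = 0 ∨ y = 0)
    (c d : ℍ[F,a,b])
    (hc1 : ∀ t : F, c ≠ algebraMap F ℍ[F,a,b] t)
    (hd1 : ∀ t : F, d ≠ algebraMap F ℍ[F,a,b] t) :
    ¬(∃ G : (ℍ[F,a,b] × ℍ[F,a,b]) ≃ₗ[F] ℍ[F,a,b] × ℍ[F,a,b],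
        G (1, 0) = (1, 0) ∧ ∀ x y, G (cayMul c x y) = cayrMul d (G x) (G y)) ∧
    ¬(∃ G : (ℍ[F,a,b] × ℍ[F,a,b]) ≃ₗ[F] ℍ[F,a,b] × ℍ[F,a,b],
        G (1, 0) = (1, 0) ∧ ∀ x y, G (caymMul c x y) = cayMul d (G x) (G y)) ∧
    ¬(∃ G : (ℍ[F,a,b] × ℍ[F,a,b]) ≃ₗ[F] ℍ[F,a,b] × ℍ[F,a,b],
        G (1, 0) = (1, 0) ∧ ∀ x y, G (caymMul c x y) = cayrMul d (G x) (G y)) := by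
  have : NoZeroDivisors ℍ[F,a,b] := ⟨hD _ _⟩
  exact ⟨not_exists_mul_equiv_cayr hchar (isRigidTwist_cay hchar hc1) (c := c) (by simp) hd1,
    not_exists_mul_equiv_cay hchar (isRigidTwist_caym hchar hc1) (c := c) (by simp) hd1,
    not_exists_mul_equiv_cayr hchar (isRigidTwist_caym hchar hc1) (c := c) (by simp) hd1⟩

/-- Let `D` be a quaternion division algebra over `F` (char ≠ 2), `L = F·1 + F·w` a
separable quadratic subfield (`w² = α·1`, `α ∈ Fˣ`), and `c, d ∈ L \ F·1`. Then there is
no unital `F`-algebra isomorphism `Cay(D,c) → Cay_r(D,d)`, none `Cay_m(D,c) → Cay(D,d)`,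
and none `Cay_m(D,c) → Cay_r(D,d)`. -/
theorem stmt_13 {F : Type*} [Field F] (hchar : (2 : F) ≠ 0) {a b : F}
    (hD : ∀ x y : ℍ[F,a,b], x * y = 0 → x = 0 ∨ y = 0)
    (w : ℍ[F,a,b]) (hw1 : ∀ t : F, w ≠ algebraMap F ℍ[F,a,b] t)
    (α : F) (hα : α ≠ 0) (hw2 : w * w = algebraMap F ℍ[F,a,b] α)
    (c d : ℍ[F,a,b]) (hcL : memL w c) (hdL : memL w d)
    (hc1 : ∀ t : F, c ≠ algebraMap F ℍ[F,a,b] t)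
    (hd1 : ∀ t : F, d ≠ algebraMap F ℍ[F,a,b] t) :
    ¬(∃ G : (ℍ[F,a,b] × ℍ[F,a,b]) ≃ₗ[F] ℍ[F,a,b] × ℍ[F,a,b],
        G (1, 0) = (1, 0) ∧ ∀ x y, G (cayMul c x y) = cayrMul d (G x) (G y)) ∧
    ¬(∃ G : (ℍ[F,a,b] × ℍ[F,a,b]) ≃ₗ[F] ℍ[F,a,b] × ℍ[F,a,b],
        G (1, 0) = (1, 0) ∧ ∀ x y, G (caymMul c x y) = cayMul d (G x) (G y)) ∧
    ¬(∃ G : (ℍ[F,a,b] × ℍ[F,a,b]) ≃ₗ[F] ℍ[F,a,b] × ℍ[F,a,b],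
        G (1, 0) = (1, 0) ∧ ∀ x y, G (caymMul c x y) = cayrMul d (G x) (G y)) :=
  stmt_13_general hchar hD c d hc1 hd1
end

section
/- Let F be a field of characteristic ≠ 2, B a quaternion division algebra over F, c ∈ B invertible with c ∉ F·1, and A = Cay(B,c). (i) Every derivation δ of A satisfies δ((c,0)) = (0,0), and writing δ((0,1)) = (r,s) with r,s ∈ B one has σ(s) = -s, σ(r) = -r and σ(rc) = -rc. (ii) For s ∈ B, the F-linear map D₀ : A → A, D₀((u,v)) = (0, sv), is a derivation of A if and only if σ(s) = -s. -/
/-!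
With `(r,s) = δ(0,1)`, the Leibniz rule on `(0,1)(0,1) = (c,0)` gives
`δ(c,0) = (c(s + σs), r + σr)`, where `s + σs` and `r + σr` are scalars. Linearity and
`c² = t(c)c - n(c)`, with the scalars `t(c) = c + σc` and `n(c) = cσc`, give
`δ(c²,0) = t(c) δ(c,0)`; comparing with the Leibniz rule on `(c,0)(c,0)` and on
`(0,1)(0,σc)` shows that `s + σs` annihilates `c(c - σc)` and `r + σr` annihilates `c - σc`.
Both are nonzero because `c` is a unit and `σc ≠ c` (as `c ∉ F`, `2 ≠ 0`), so `δ(c,0) = 0`.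
Then `(c,0)(0,1) = (0,c)` and `(0,1)(c,0) = (0,σc)` give `cr + rc = t(c) r`, which is
`σ(rc) = -rc`. For `D₀`, the Leibniz rule on `(0,1)(0,1)` reads `c(s + σs) = 0`, and
conversely `σs = -s` turns it into a ring identity.
-/

open Quaternion

namespace QuaternionAlgebra

variable {F : Type*} [Field F] {a b : F}

theorem self_add_star_eq_coe (x : ℍ[F,a,b]) : x + star x = ((2 * x.re : F) : ℍ[F,a,b]) := by
  rw [self_add_star', zero_mul, add_zero]

theorem star_eq_neg_of_two_mul_re_eq_zero {x : ℍ[F,a,b]} (h : 2 * x.re = 0) : star x = -x := by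
  rw [eq_neg_iff_add_eq_zero, add_comm, self_add_star_eq_coe, h, coe_zero]

theorem star_ne_self (h2 : (2 : F) ≠ 0) {c : ℍ[F,a,b]}
    (hc : ∀ t : F, c ≠ algebraMap F ℍ[F,a,b] t) : star c ≠ c := by
  intro h
  apply hc c.re
  simp_all [QuaternionAlgebra.ext_iff, neg_eq_iff_add_eq_zero, ← two_mul]

theorem mul_self_eq_smul_sub_smul_one (c : ℍ[F,a,b]) :
    c * c = (2 * c.re) • c - (c * star c).re • 1 := by
  have hc : c = ((2 * c.re : F) : ℍ[F,a,b]) - star c := by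
    rw [← self_add_star_eq_coe, add_sub_cancel_right]
  nth_rw 2 [hc]
  rw [mul_sub, mul_coe_eq_smul, ← Algebra.algebraMap_eq_smul_one, coe_algebraMap,
    ← mul_star_eq_coe]

theorem mul_self_add_mul_self_sub (c : ℍ[F,a,b]) :
    c * c + c * c - (2 * c.re) • c = c * (c - star c) := by
  rw [star_eq_two_re_sub, zero_mul, add_zero, mul_sub, mul_sub, mul_coe_eq_smul]
  abel

theorem eq_zero_of_mul_coe_eq_zero {x : ℍ[F,a,b]} (hx : x ≠ 0) {t : F} (h : x * t = 0) :
    t = 0 := by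
  rw [mul_coe_eq_smul, smul_eq_zero] at h
  exact h.resolve_right hx

end QuaternionAlgebra

open QuaternionAlgebra

section CayleyDickson

variable {F : Type*} [Field F] {a b : F} (c : ℍ[F,a,b])

@[simp]
theorem cayMul_mk_zero_left (u : ℍ[F,a,b]) (y : ℍ[F,a,b] × ℍ[F,a,b]) :
    cayMul c (u, 0) y = (u * y.1, y.2 * u) := by
  simp [cayMul]

@[simp]
theorem cayMul_mk_zero_right (x : ℍ[F,a,b] × ℍ[F,a,b]) (u : ℍ[F,a,b]) :
    cayMul c x (u, 0) = (x.1 * u, x.2 * star u) := by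
  simp [cayMul]

@[simp]
theorem cayMul_zero_mk_left (v : ℍ[F,a,b]) (y : ℍ[F,a,b] × ℍ[F,a,b]) :
    cayMul c (0, v) y = (c * (star y.2 * v), v * star y.1) := by
  simp [cayMul]

@[simp]
theorem cayMul_zero_mk_right (x : ℍ[F,a,b] × ℍ[F,a,b]) (v : ℍ[F,a,b]) :
    cayMul c x (0, v) = (c * (star v * x.2), v * x.1) := by
  simp [cayMul]

def IsCayDerivation (δ : ℍ[F,a,b] × ℍ[F,a,b] →ₗ[F] ℍ[F,a,b] × ℍ[F,a,b]) : Prop :=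
  ∀ x y, δ (cayMul c x y) = cayMul c (δ x) y + cayMul c x (δ y)

theorem map_mk_mul_self_zero (δ : ℍ[F,a,b] × ℍ[F,a,b] →ₗ[F] ℍ[F,a,b] × ℍ[F,a,b]) :
    δ (c * c, 0) = (2 * c.re) • δ (c, 0) - (c * star c).re • δ (1, 0) := by
  rw [← map_smul, ← map_smul, ← map_sub, mul_self_eq_smul_sub_smul_one]
  simp only [Prod.smul_mk, Prod.mk_sub_mk, smul_zero, sub_zero]

theorem map_zero_mk_add_map_zero_mk_star (δ : ℍ[F,a,b] × ℍ[F,a,b] →ₗ[F] ℍ[F,a,b] × ℍ[F,a,b]) :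
    δ (0, c) + δ (0, star c) = (2 * c.re) • δ (0, 1) := by
  rw [← map_add, ← map_smul, Prod.mk_add_mk, add_zero, self_add_star_eq_coe, Prod.smul_mk,
    smul_zero, ← Algebra.algebraMap_eq_smul_one, coe_algebraMap]

namespace IsCayDerivation

variable {c} {δ : ℍ[F,a,b] × ℍ[F,a,b] →ₗ[F] ℍ[F,a,b] × ℍ[F,a,b]} {r s : ℍ[F,a,b]}

theorem map_one_zero (hδ : IsCayDerivation c δ) : δ (1, 0) = 0 := by
  have h := hδ (1, 0) (1, 0)
  simp only [cayMul_mk_zero_left, cayMul_mk_zero_right, one_mul, mul_one, star_one,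
    Prod.mk.eta] at h
  exact left_eq_add.mp h

theorem map_mk_zero_eq (hδ : IsCayDerivation c δ) (h01 : δ (0, 1) = (r, s)) :
    δ (c, 0) = (c * (s + star s), r + star r) := by
  have h := hδ (0, 1) (0, 1)
  simp only [cayMul_zero_mk_left, cayMul_zero_mk_right, h01, star_one, mul_one, one_mul,
    mul_zero, Prod.mk_add_mk] at h
  rw [h, mul_add]

theorem star_snd_eq_neg (hδ : IsCayDerivation c δ) (h01 : δ (0, 1) = (r, s)) (hc : IsUnit c)
    (hcs : star c ≠ c) : star s = -s := by
  have h := congrArg Prod.fst (hδ (c, 0) (c, 0))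
  simp only [cayMul_mk_zero_left, cayMul_mk_zero_right, zero_mul, map_mk_mul_self_zero,
    hδ.map_one_zero, smul_zero, sub_zero, hδ.map_mk_zero_eq h01, self_add_star_eq_coe,
    Prod.smul_fst, Prod.fst_add] at h
  apply star_eq_neg_of_two_mul_re_eq_zero
  -- `s + star s` is the scalar `2 * s.re`, so `h` says that it annihilates `c * (c - star c)`
  refine eq_zero_of_mul_coe_eq_zero ?_ (?_ : c * (c - star c) * _ = 0)
  · exact hc.mul_right_eq_zero.not.mpr (sub_ne_zero.mpr hcs.symm)
  · rw [← mul_self_add_mul_self_sub, sub_mul, add_mul, smul_mul_assoc, h, mul_assoc c _ c,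
      coe_commutes]
    noncomm_ring

theorem map_mk_zero_eq_zero (hδ : IsCayDerivation c δ) (h01 : δ (0, 1) = (r, s)) (hc : IsUnit c)
    (hcs : star c ≠ c) : δ (c, 0) = 0 := by
  have hs := hδ.star_snd_eq_neg h01 hc hcs
  obtain ⟨m, hm⟩ : ∃ m : F, r + star r = m := ⟨_, self_add_star_eq_coe r⟩
  have hδc : δ (c, 0) = (0, (m : ℍ[F,a,b])) := by
    rw [hδ.map_mk_zero_eq h01, hs, add_neg_cancel, mul_zero, hm]
  have hδσc := hδ (0, 1) (c, 0)
  simp only [cayMul_zero_mk_right, cayMul_mk_zero_right, h01, hδc, star_coe, zero_mul, one_mul,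
    mul_one, mul_zero, Prod.mk_add_mk, add_zero] at hδσc
  -- `(0,1)(0,σc) = (c²,0)` and `δ(c²,0) = t(c) δ(c,0)`
  have hcm : c * (m : ℍ[F,a,b]) = star c * m := by
    have h := congrArg Prod.snd (hδ (0, 1) (0, star c))
    simp only [cayMul_zero_mk_left, cayMul_zero_mk_right, map_mk_mul_self_zero, hδ.map_one_zero,
      hδc, h01, hδσc, star_star, star_mul, star_add, star_coe, mul_one, one_mul,
      mul_zero, smul_zero, sub_zero, Prod.smul_mk, Prod.mk_add_mk] at h
    rwa [← add_assoc, ← mul_add, hm, ← coe_mul_eq_smul, ← self_add_star_eq_coe,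
      QuaternionAlgebra.coe_commutes m, add_mul, add_left_inj] at h
  have hm0 : m = 0 :=
    eq_zero_of_mul_coe_eq_zero (sub_ne_zero.mpr hcs) (by rw [sub_mul, hcm, sub_self])
  rw [hδc, hm0, QuaternionAlgebra.coe_zero, Prod.mk_zero_zero]

theorem star_fst_eq_neg (hδ : IsCayDerivation c δ) (h01 : δ (0, 1) = (r, s)) (hc : IsUnit c)
    (hcs : star c ≠ c) : star r = -r :=
  eq_neg_of_add_eq_zero_right <|
    congrArg Prod.snd ((hδ.map_mk_zero_eq h01).symm.trans (hδ.map_mk_zero_eq_zero h01 hc hcs))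

theorem mul_fst_add_fst_mul (hδ : IsCayDerivation c δ) (h01 : δ (0, 1) = (r, s))
    (hc : IsUnit c) (hcs : star c ≠ c) : c * r + r * c = (c + star c) * r := by
  have hδc := hδ.map_mk_zero_eq_zero h01 hc hcs
  have hδ_zero_c := hδ (c, 0) (0, 1)
  simp only [cayMul_mk_zero_left, cayMul_zero_mk_right, hδc, h01, Prod.fst_zero, Prod.snd_zero,
    star_one, one_mul, mul_zero, Prod.mk_add_mk, zero_add] at hδ_zero_c
  have hδ_zero_σc := hδ (0, 1) (c, 0)
  simp only [cayMul_zero_mk_left, cayMul_mk_zero_right, hδc, h01, Prod.fst_zero, Prod.snd_zero,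
    star_zero, zero_mul, one_mul, mul_one, mul_zero, Prod.mk_add_mk, add_zero] at hδ_zero_σc
  have h := congrArg Prod.fst (map_zero_mk_add_map_zero_mk_star c δ)
  rw [self_add_star_eq_coe, coe_mul_eq_smul]
  simpa [hδ_zero_c, hδ_zero_σc, h01] using h

theorem star_fst_mul_eq_neg (hδ : IsCayDerivation c δ) (h01 : δ (0, 1) = (r, s))
    (hc : IsUnit c) (hcs : star c ≠ c) : star (r * c) = -(r * c) := by
  rw [star_mul, hδ.star_fst_eq_neg h01 hc hcs, mul_neg, neg_inj, ← add_right_inj (c * r),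
    ← add_mul, hδ.mul_fst_add_fst_mul h01 hc hcs]

end IsCayDerivation

def mulLeftSnd (s : ℍ[F,a,b]) : ℍ[F,a,b] × ℍ[F,a,b] →ₗ[F] ℍ[F,a,b] × ℍ[F,a,b] :=
  LinearMap.inr F _ _ ∘ₗ LinearMap.mulLeft F s ∘ₗ LinearMap.snd F _ _

theorem isCayDerivation_mulLeftSnd_iff {c : ℍ[F,a,b]} (hc : IsUnit c) (s : ℍ[F,a,b]) :
    IsCayDerivation c (mulLeftSnd s) ↔ star s = -s := by
  have hD : ∀ x, mulLeftSnd s x = (0, s * x.2) := fun _ => rfl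
  simp only [IsCayDerivation, hD]
  constructor
  · intro h
    have h1 := congrArg Prod.fst (h (0, 1) (0, 1))
    simp only [cayMul_zero_mk_right, star_one, mul_one, one_mul, Prod.fst_add] at h1
    rw [eq_neg_iff_add_eq_zero, add_comm, ← hc.mul_right_eq_zero, mul_add]
    exact h1.symm
  · intro hs x y
    simp only [cayMul, star_mul, star_zero, hs, Prod.mk_add_mk, mul_zero, zero_mul, zero_add,
      Prod.mk.injEq]
    constructor <;> noncomm_ring

end CayleyDickson

theorem stmt_14_general {F : Type*} [Field F] (hchar : (2 : F) ≠ 0) {a b : F}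
    (c : ℍ[F,a,b]) (hc : IsUnit c)
    (hc1 : ∀ t : F, c ≠ algebraMap F ℍ[F,a,b] t) :
    (∀ δ : (ℍ[F,a,b] × ℍ[F,a,b]) →ₗ[F] ℍ[F,a,b] × ℍ[F,a,b],
      (∀ x y, δ (cayMul c x y) = cayMul c (δ x) y + cayMul c x (δ y)) →
      δ (c, 0) = 0 ∧
      star (δ (0, 1)).2 = -(δ (0, 1)).2 ∧
      star (δ (0, 1)).1 = -(δ (0, 1)).1 ∧
      star ((δ (0, 1)).1 * c) = -((δ (0, 1)).1 * c)) ∧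
    (∀ s : ℍ[F,a,b],
      (∀ x y : ℍ[F,a,b] × ℍ[F,a,b],
        ((0, s * (cayMul c x y).2) : ℍ[F,a,b] × ℍ[F,a,b]) =
          cayMul c (0, s * x.2) y + cayMul c x (0, s * y.2)) ↔
      star s = -s) := by
  have hcs : star c ≠ c := star_ne_self hchar hc1
  refine ⟨fun δ (hδ : IsCayDerivation c δ) => ?_, isCayDerivation_mulLeftSnd_iff hc⟩
  have h01 : δ (0, 1) = ((δ (0, 1)).1, (δ (0, 1)).2) := rfl
  exact ⟨hδ.map_mk_zero_eq_zero h01 hc hcs, hδ.star_snd_eq_neg h01 hc hcs,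
    hδ.star_fst_eq_neg h01 hc hcs, hδ.star_fst_mul_eq_neg h01 hc hcs⟩

/-- Let `B` be a quaternion division algebra over a field `F` of characteristic ≠ 2 and
`c ∈ B` invertible with `c ∉ F·1`, and `A = Cay(B,c)`. (i) Every derivation `δ` of `A`
satisfies `δ((c,0)) = 0`, and with `(r,s) = δ((0,1))` one has `σ(s) = -s`, `σ(r) = -r`
and `σ(rc) = -rc`. (ii) For `s ∈ B` the map `D₀((u,v)) = (0, sv)` is a derivation of
`A` if and only if `σ(s) = -s`. -/
theorem stmt_14 {F : Type*} [Field F] (hchar : (2 : F) ≠ 0) {a b : F}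
    (hB : ∀ x y : ℍ[F,a,b], x * y = 0 → x = 0 ∨ y = 0)
    (c : ℍ[F,a,b]) (hc : IsUnit c)
    (hc1 : ∀ t : F, c ≠ algebraMap F ℍ[F,a,b] t) :
    (∀ δ : (ℍ[F,a,b] × ℍ[F,a,b]) →ₗ[F] ℍ[F,a,b] × ℍ[F,a,b],
      (∀ x y, δ (cayMul c x y) = cayMul c (δ x) y + cayMul c x (δ y)) →
      δ (c, 0) = 0 ∧
      star (δ (0, 1)).2 = -(δ (0, 1)).2 ∧
      star (δ (0, 1)).1 = -(δ (0, 1)).1 ∧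
      star ((δ (0, 1)).1 * c) = -((δ (0, 1)).1 * c)) ∧
    (∀ s : ℍ[F,a,b],
      (∀ x y : ℍ[F,a,b] × ℍ[F,a,b],
        ((0, s * (cayMul c x y).2) : ℍ[F,a,b] × ℍ[F,a,b]) =
          cayMul c (0, s * x.2) y + cayMul c x (0, s * y.2)) ↔
      star s = -s) :=
  stmt_14_general hchar c hc hc1
end

section
/- Let F be a field of characteristic ≠ 2, B a quaternion division algebra over F, c ∈ B invertible with c ∉ F·1, and A = Cay_r(B,c). (i) Every derivation δ of A satisfies δ((c,0)) = (0,0), and writing δ((0,1)) = (r,s) with r,s ∈ B one has σ(s) = -s, σ(r) = -r and σ(rc) = -rc. (ii) For s ∈ B, the F-linear map D₀ : A → A, D₀((u,v)) = (0, sv), is a derivation of A if and only if σ(s) = -s. -/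
/-!
Write `δ (u, 0) = (d u, g u)` and `δ (0, 1) = (r, s)`. The Leibniz rule applied to
`(u,0)(v,0) = (uv,0)`, `(u,0)(0,1) = (0,u)`, `(0,u)(0,1) = (uc,0)` and `(u,0)(0,v) = (0,vu)`
expresses `δ` through `d`, `g`, `r`, `s`, and gives `δ (c, 0) = ((s + σ s) c, r + σ r)`.
Since `r + σ r` is a scalar, the two resulting expressions for `g (u c)` give
`g u (c - σ c) = 0`, so `g = 0` as `c ∉ F`. Then `[u, v] r = 0` for all `u, v`, and `[i, j] = 2k`
forces `r = 0`. Finally `d` is a derivation of `B`, so it kills the scalars `c σ c` and `c + σ c`,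
whence `d c σ c = c d c`; as `d c = (s + σ s) c` with `s + σ s` a scalar, this says
`(s + σ s) c (c - σ c) = 0`, so `s + σ s = 0` and `δ (c, 0) = 0`.
-/

open Quaternion

namespace QuaternionAlgebra

variable {R : Type*} [CommRing R] {c₁ c₂ c₃ : R}

theorem eq_re_of_star_eq_self [NoZeroDivisors R] (h2 : (2 : R) ≠ 0)
    {x : ℍ[R,c₁,c₂,c₃]} (h : star x = x) : x = x.re := by
  have eq_zero : ∀ y : R, -y = y → y = 0 := fun y hy =>
    (mul_eq_zero.mp (by linear_combination -hy : (2 : R) * y = 0)).resolve_left h2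
  have hI : x.imI = 0 := eq_zero _ (by simpa using congrArg imI h)
  have hJ : x.imJ = 0 := eq_zero _ (by simpa using congrArg imJ h)
  have hK : x.imK = 0 := eq_zero _ (by simpa using congrArg imK h)
  ext <;> simp [hI, hJ, hK]

theorem commute_self_add_star (x y : ℍ[R,c₁,c₂,c₃]) : Commute (x + star x) y := by
  rw [self_add_star']
  exact coe_commute _ _

theorem eq_zero_of_forall_mul_mul_comm [NoZeroDivisors ℍ[R,c₁,c₂,c₃]] (h2 : (2 : R) ≠ 0)
    {r : ℍ[R,c₁,c₂,c₃]} (h : ∀ u v : ℍ[R,c₁,c₂,c₃], u * v * r = v * u * r) : r = 0 := by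
  have hij : (⟨0, 1, 0, 0⟩ * ⟨0, 0, 1, 0⟩ - ⟨0, 0, 1, 0⟩ * ⟨0, 1, 0, 0⟩ : ℍ[R,c₁,c₂,c₃]) ≠ 0 :=
    fun h0 => h2 (by simpa [one_add_one_eq_two] using congrArg imK h0)
  refine (mul_eq_zero.mp ?_).resolve_left hij
  rw [sub_mul, h, sub_self]

theorem leibniz_mul_star (D : ℍ[R,c₁,c₂,c₃] →ₗ[R] ℍ[R,c₁,c₂,c₃])
    (hD : ∀ u v, D (u * v) = D u * v + u * D v) (x : ℍ[R,c₁,c₂,c₃]) :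
    D x * star x = x * D x := by
  have hD1 : D 1 = 0 := by simpa using hD 1 1
  have hcoe : ∀ t : R, D t = 0 := fun t => by
    rw [show (t : ℍ[R,c₁,c₂,c₃]) = t • 1 by ext <;> simp, map_smul, hD1, smul_zero]
  have hstar : D (star x) = -D x := by
    rw [eq_neg_iff_add_eq_zero, ← map_add, add_comm, self_add_star', hcoe]
  have := hD x (star x)
  rw [mul_star_eq_coe, hcoe, hstar] at this
  linear_combination (norm := noncomm_ring) -this

end QuaternionAlgebra

def IsCayrDerivation {F : Type*} [Field F] {a b : F} (c : ℍ[F,a,b])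
    (δ : (ℍ[F,a,b] × ℍ[F,a,b]) →ₗ[F] ℍ[F,a,b] × ℍ[F,a,b]) : Prop :=
  ∀ x y, δ (cayrMul c x y) = cayrMul c (δ x) y + cayrMul c x (δ y)

namespace IsCayrDerivation

open QuaternionAlgebra

variable {F : Type*} [Field F] {a b : F} {c : ℍ[F,a,b]}
  {δ : (ℍ[F,a,b] × ℍ[F,a,b]) →ₗ[F] ℍ[F,a,b] × ℍ[F,a,b]}

theorem map_one (hδ : IsCayrDerivation c δ) : δ (1, 0) = 0 := by
  simpa [cayrMul] using hδ (1, 0) (1, 0)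

theorem fst_map_mul (hδ : IsCayrDerivation c δ) (u v : ℍ[F,a,b]) :
    (δ (u * v, 0)).1 = (δ (u, 0)).1 * v + u * (δ (v, 0)).1 := by
  simpa [cayrMul] using congrArg Prod.fst (hδ (u, 0) (v, 0))

theorem snd_map_mul (hδ : IsCayrDerivation c δ) (u v : ℍ[F,a,b]) :
    (δ (u * v, 0)).2 = (δ (u, 0)).2 * star v + (δ (v, 0)).2 * u := by
  simpa [cayrMul] using congrArg Prod.snd (hδ (u, 0) (v, 0))

theorem map_inr (hδ : IsCayrDerivation c δ) (u : ℍ[F,a,b]) :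
    δ (0, u) = ((δ (u, 0)).2 * c + u * (δ (0, 1)).1, (δ (u, 0)).1 + (δ (0, 1)).2 * u) := by
  simpa [cayrMul] using hδ (u, 0) (0, 1)

theorem map_inl_mul_self (hδ : IsCayrDerivation c δ) (u : ℍ[F,a,b]) :
    δ (u * c, 0) = ((δ (0, u)).2 * c + star (δ (0, 1)).2 * u * c,
      (δ (0, u)).1 + u * star (δ (0, 1)).1) := by
  simpa [cayrMul] using hδ (0, u) (0, 1)

theorem fst_map_inr_mul (hδ : IsCayrDerivation c δ) (u v : ℍ[F,a,b]) :
    (δ (0, v * u)).1 = star v * (δ (u, 0)).2 * c + u * (δ (0, v)).1 := by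
  simpa [cayrMul] using congrArg Prod.fst (hδ (u, 0) (0, v))

theorem map_inl_self (hδ : IsCayrDerivation c δ) :
    δ (c, 0) = (((δ (0, 1)).2 + star (δ (0, 1)).2) * c, (δ (0, 1)).1 + star (δ (0, 1)).1) := by
  have h := hδ.map_inl_mul_self 1
  rw [hδ.map_inr 1, hδ.map_one] at h
  simpa [add_mul] using h

variable [NoZeroDivisors ℍ[F,a,b]]

theorem snd_map_inl_eq_zero (hδ : IsCayrDerivation c δ) (hc : c - star c ≠ 0)
    (u : ℍ[F,a,b]) : (δ (u, 0)).2 = 0 := by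
  have h₁ := congrArg Prod.snd (hδ.map_inl_mul_self u)
  have h₂ := hδ.snd_map_mul u c
  rw [hδ.map_inr u] at h₁
  rw [hδ.map_inl_self] at h₂
  set r := (δ (0, 1)).1
  have key : (δ (u, 0)).2 * (c - star c) = (r + star r) * u - u * (r + star r) := by
    linear_combination (norm := noncomm_ring) h₂ - h₁
  rw [(commute_self_add_star r u).eq, sub_self] at key
  exact (mul_eq_zero.mp key).resolve_right hc

theorem fst_map_inr_one_eq_zero (hδ : IsCayrDerivation c δ) (h2 : (2 : F) ≠ 0)
    (hc : c - star c ≠ 0) : (δ (0, 1)).1 = 0 := by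
  refine eq_zero_of_forall_mul_mul_comm h2 fun u v => ?_
  have := hδ.fst_map_inr_mul u v
  rw [hδ.map_inr (v * u), hδ.map_inr v, hδ.snd_map_inl_eq_zero hc, hδ.snd_map_inl_eq_zero hc,
    hδ.snd_map_inl_eq_zero hc] at this
  simp only [mul_zero, zero_mul, zero_add] at this
  rw [this, mul_assoc]

theorem snd_map_inr_one_add_star_eq_zero (hδ : IsCayrDerivation c δ) (hc : c - star c ≠ 0)
    (hc0 : c ≠ 0) : (δ (0, 1)).2 + star (δ (0, 1)).2 = 0 := by
  have hleib := leibniz_mul_star ((LinearMap.fst F _ _) ∘ₗ δ ∘ₗ (LinearMap.inl F _ _))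
    (fun u v => by simpa using hδ.fst_map_mul u v) c
  simp only [LinearMap.comp_apply, LinearMap.inl_apply, LinearMap.fst_apply,
    hδ.map_inl_self] at hleib
  have key : ((δ (0, 1)).2 + star (δ (0, 1)).2) * c * (c - star c) = 0 := by
    rw [mul_sub, hleib, ← mul_assoc, ← (commute_self_add_star _ c).eq, sub_self]
  exact (mul_eq_zero.mp ((mul_eq_zero.mp key).resolve_right hc)).resolve_right hc0

end IsCayrDerivation

theorem isCayrDerivation_inr_mulLeft_snd_iff {F : Type*} [Field F] {a b : F}
    [NoZeroDivisors ℍ[F,a,b]] {c : ℍ[F,a,b]} (hc0 : c ≠ 0) (s : ℍ[F,a,b]) :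
    IsCayrDerivation c (LinearMap.inr F _ _ ∘ₗ LinearMap.mulLeft F s ∘ₗ LinearMap.snd F _ _) ↔
      star s = -s := by
  constructor
  · intro h
    have h₁ : 0 = s * c + star s * c := by
      simpa [cayrMul] using congrArg Prod.fst (h (0, 1) (0, 1))
    rw [← add_mul, eq_comm, mul_eq_zero, or_iff_left hc0] at h₁
    exact eq_neg_of_add_eq_zero_right h₁
  · intro hs x y
    simp only [LinearMap.comp_apply, LinearMap.snd_apply, LinearMap.mulLeft_apply,
      LinearMap.inr_apply, cayrMul, star_zero, mul_zero, zero_mul, add_zero, zero_add,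
      star_mul, hs, Prod.mk_add_mk, Prod.mk.injEq]
    constructor <;> noncomm_ring

theorem stmt_16_general {F : Type*} [Field F] (hchar : (2 : F) ≠ 0) {a b : F}
    (hB : ∀ x y : ℍ[F,a,b], x * y = 0 → x = 0 ∨ y = 0)
    (c : ℍ[F,a,b])
    (hc1 : ∀ t : F, c ≠ algebraMap F ℍ[F,a,b] t) :
    (∀ δ : (ℍ[F,a,b] × ℍ[F,a,b]) →ₗ[F] ℍ[F,a,b] × ℍ[F,a,b],
      (∀ x y, δ (cayrMul c x y) = cayrMul c (δ x) y + cayrMul c x (δ y)) →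
      δ (c, 0) = 0 ∧
      star (δ (0, 1)).2 = -(δ (0, 1)).2 ∧
      star (δ (0, 1)).1 = -(δ (0, 1)).1 ∧
      star ((δ (0, 1)).1 * c) = -((δ (0, 1)).1 * c)) ∧
    (∀ s : ℍ[F,a,b],
      (∀ x y : ℍ[F,a,b] × ℍ[F,a,b],
        ((0, s * (cayrMul c x y).2) : ℍ[F,a,b] × ℍ[F,a,b]) =
          cayrMul c (0, s * x.2) y + cayrMul c x (0, s * y.2)) ↔
      star s = -s) := by
  have : NoZeroDivisors ℍ[F,a,b] := ⟨fun h => hB _ _ h⟩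
  have hc0 : c ≠ 0 := by simpa using hc1 0
  have hc : c - star c ≠ 0 := fun h => hc1 c.re <| by
    rw [QuaternionAlgebra.coe_algebraMap]
    exact QuaternionAlgebra.eq_re_of_star_eq_self hchar (sub_eq_zero.mp h).symm
  refine ⟨fun δ hδ => ?_, isCayrDerivation_inr_mulLeft_snd_iff hc0⟩
  have hr := IsCayrDerivation.fst_map_inr_one_eq_zero hδ hchar hc
  have hs := IsCayrDerivation.snd_map_inr_one_add_star_eq_zero hδ hc hc0
  refine ⟨?_, eq_neg_of_add_eq_zero_right hs, by simp [hr], by simp [hr]⟩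
  rw [IsCayrDerivation.map_inl_self hδ, hs, hr]
  simp

/-- Let `B` be a quaternion division algebra over a field `F` of characteristic ≠ 2 and
`c ∈ B` invertible with `c ∉ F·1`, and `A = Cay_r(B,c)`. (i) Every derivation `δ` of `A`
satisfies `δ((c,0)) = 0`, and with `(r,s) = δ((0,1))` one has `σ(s) = -s`, `σ(r) = -r`
and `σ(rc) = -rc`. (ii) For `s ∈ B` the map `D₀((u,v)) = (0, sv)` is a derivation of
`A` if and only if `σ(s) = -s`. -/
theorem stmt_16 {F : Type*} [Field F] (hchar : (2 : F) ≠ 0) {a b : F}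
    (hB : ∀ x y : ℍ[F,a,b], x * y = 0 → x = 0 ∨ y = 0)
    (c : ℍ[F,a,b]) (hc : IsUnit c)
    (hc1 : ∀ t : F, c ≠ algebraMap F ℍ[F,a,b] t) :
    (∀ δ : (ℍ[F,a,b] × ℍ[F,a,b]) →ₗ[F] ℍ[F,a,b] × ℍ[F,a,b],
      (∀ x y, δ (cayrMul c x y) = cayrMul c (δ x) y + cayrMul c x (δ y)) →
      δ (c, 0) = 0 ∧
      star (δ (0, 1)).2 = -(δ (0, 1)).2 ∧
      star (δ (0, 1)).1 = -(δ (0, 1)).1 ∧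
      star ((δ (0, 1)).1 * c) = -((δ (0, 1)).1 * c)) ∧
    (∀ s : ℍ[F,a,b],
      (∀ x y : ℍ[F,a,b] × ℍ[F,a,b],
        ((0, s * (cayrMul c x y).2) : ℍ[F,a,b] × ℍ[F,a,b]) =
          cayrMul c (0, s * x.2) y + cayrMul c x (0, s * y.2)) ↔
      star s = -s) :=
  stmt_16_general hchar hB c hc1
end

section
/- Let F be a field and C a unital F-algebra (not necessarily associative) equipped with an F-linear involution σ : C → C (σ∘σ = id, σ(1) = 1, σ(xy) = σ(y)σ(x)) which is scalar, i.e., for every x ∈ C there is N(x) ∈ F with σ(x)x = x σ(x) = N(x)·1; assume the norm N is multiplicative (N(xy) = N(x)N(y) for all x,y ∈ C), that C is flexible ((xy)x = x(yx) for all x,y), and that C has no zero divisors. Let c ∈ C with c ∉ F·1, N(c) ≠ 0, and suppose N(c) ∉ {N(x)² : x ∈ C, x ≠ 0}. Then the Cayley-Dickson doubling Cay(C,c), the F-vector space C ⊕ C with unit (1,0) and multiplication (u,v)(u',v') = (uu' + c(σ(v')v), v'u + vσ(u')), has no zero divisors, i.e., it is a division algebra; the same conclusion holds for the multiplications (uu'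 + σ(v')(cv), v'u + vσ(u')), (uu' + (σ(v')v)c, v'u + vσ(u')), (uu' + (cσ(v'))v, v'u + vσ(u')), (uu' + (σ(v')c)v, v'u + vσ(u')) and (uu' + σ(v')(vc), v'u + vσ(u')). -/
/-- Generalized Cayley–Dickson doubling multiplication `(u,v)(u',v') =
`(uu' + c(σ(v')v), v'u + vσ(u'))` on `C ⊕ C` (scalar on the left). -/
def dMul1 {C : Type*} [NonAssocRing C] (σ : C → C) (c : C) (x y : C × C) : C × C :=
  (x.1 * y.1 + c * (σ y.2 * x.2), y.2 * x.1 + x.2 * σ y.1)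

/-- `(u,v)(u',v') = (uu' + σ(v')(cv), v'u + vσ(u'))` (scalar in the middle). -/
def dMul2 {C : Type*} [NonAssocRing C] (σ : C → C) (c : C) (x y : C × C) : C × C :=
  (x.1 * y.1 + σ y.2 * (c * x.2), y.2 * x.1 + x.2 * σ y.1)

/-- `(u,v)(u',v') = (uu' + (σ(v')v)c, v'u + vσ(u'))` (scalar on the right). -/
def dMul3 {C : Type*} [NonAssocRing C] (σ : C → C) (c : C) (x y : C × C) : C × C :=
  (x.1 * y.1 + (σ y.2 * x.2) * c, y.2 * x.1 + x.2 * σ y.1)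

/-- `(u,v)(u',v') = (uu' + (cσ(v'))v, v'u + vσ(u'))`. -/
def dMul4 {C : Type*} [NonAssocRing C] (σ : C → C) (c : C) (x y : C × C) : C × C :=
  (x.1 * y.1 + (c * σ y.2) * x.2, y.2 * x.1 + x.2 * σ y.1)

/-- `(u,v)(u',v') = (uu' + (σ(v')c)v, v'u + vσ(u'))`. -/
def dMul5 {C : Type*} [NonAssocRing C] (σ : C → C) (c : C) (x y : C × C) : C × C :=
  (x.1 * y.1 + (σ y.2 * c) * x.2, y.2 * x.1 + x.2 * σ y.1)

/-- `(u,v)(u',v') = (uu' + σ(v')(vc), v'u + vσ(u'))`. -/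
def dMul6 {C : Type*} [NonAssocRing C] (σ : C → C) (c : C) (x y : C × C) : C × C :=
  (x.1 * y.1 + σ y.2 * (x.2 * c), y.2 * x.1 + x.2 * σ y.1)


/-! Everything is read off the norm. For `x = (u, v)` and `y = (u', v')` with `xy = 0`, the two
components give `N u N u' = N c N v' N v` and `N v' N u = N v N u'`, so
`N v' (N u² - N c N v²) = 0`. If `N v ≠ 0`, then `N c = (N u / N v)² = N((N v)⁻¹ • uv)²` is the
square of a norm, which is excluded; as `N` vanishes only at `0`, this leaves `x = 0` or `y = 0`. -/

/-- `dMul1`, ..., `dMul6` are `cdMul σ f` for `f a b = c (σ(a) b)`, `σ(a) (c b)`, .... -/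
def cdMul {C : Type*} [NonAssocRing C] (σ : C → C) (f : C → C → C) (x y : C × C) : C × C :=
  (x.1 * y.1 + f y.2 x.2, y.2 * x.1 + x.2 * σ y.1)

namespace ScalarInvolution

variable {F C : Type*} [Field F] [NonAssocRing C] [Module F C] [Nontrivial C]
  {σ : C →ₗ[F] C} {N : C → F}

theorem norm_zero (hN : ∀ x : C, σ x * x = N x • (1 : C) ∧ x * σ x = N x • (1 : C)) :
    N 0 = 0 :=
  (smul_left_inj (one_ne_zero (α := C))).mp <| by rw [← (hN 0).1, mul_zero, zero_smul]

theorem norm_eq_zero_iff (hσσ : ∀ x, σ (σ x) = x)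
    (hN : ∀ x : C, σ x * x = N x • (1 : C) ∧ x * σ x = N x • (1 : C))
    (hdiv : ∀ x y : C, x * y = 0 → x = 0 ∨ y = 0) {x : C} : N x = 0 ↔ x = 0 := by
  refine ⟨fun hx => ?_, fun hx => hx ▸ norm_zero hN⟩
  have hσx : σ x * x = 0 := by rw [(hN x).1, hx, zero_smul]
  rcases hdiv _ _ hσx with h | h
  · rw [← hσσ x, h, map_zero]
  · exact h

theorem norm_neg (hN : ∀ x : C, σ x * x = N x • (1 : C) ∧ x * σ x = N x • (1 : C))
    (x : C) : N (-x) = N x :=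
  (smul_left_inj (one_ne_zero (α := C))).mp <| by
    rw [← (hN _).1, map_neg, neg_mul_neg, (hN x).1]

theorem norm_involution (hσσ : ∀ x, σ (σ x) = x)
    (hN : ∀ x : C, σ x * x = N x • (1 : C) ∧ x * σ x = N x • (1 : C)) (x : C) :
    N (σ x) = N x :=
  (smul_left_inj (one_ne_zero (α := C))).mp <| by
    rw [← (hN (σ x)).1, hσσ, (hN x).2]

theorem norm_smul [SMulCommClass F C C] [IsScalarTower F C C]
    (hN : ∀ x : C, σ x * x = N x • (1 : C) ∧ x * σ x = N x • (1 : C)) (t : F) (x : C) :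
    N (t • x) = t ^ 2 * N x :=
  (smul_left_inj (one_ne_zero (α := C))).mp <| by
    rw [← (hN _).1, map_smul, smul_mul_assoc, mul_smul_comm, (hN x).1, smul_smul, smul_smul, sq,
      mul_assoc]

/-- `N u / N v` is the norm of `(N v)⁻¹ • uv`, so `N c` would be the square of a norm. -/
theorem norm_eq_zero_of_sq_norm_eq [SMulCommClass F C C] [IsScalarTower F C C]
    (hN : ∀ x : C, σ x * x = N x • (1 : C) ∧ x * σ x = N x • (1 : C))
    (hNm : ∀ x y, N (x * y) = N x * N y) {c : C} (hcN : N c ≠ 0)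
    (hsq : ∀ x : C, x ≠ 0 → N c ≠ (N x) ^ 2) {u v : C} (h : N u ^ 2 = N c * N v ^ 2) :
    N v = 0 := by
  by_contra hv
  set z := (N v)⁻¹ • (u * v)
  have hz : N c = N z ^ 2 := by
    rw [norm_smul hN, hNm]
    field_simp
    linear_combination -h
  refine hsq z (fun hz0 => hcN ?_) hz
  rw [hz, hz0, norm_zero hN, zero_pow two_ne_zero]

theorem eq_zero_or_eq_zero_of_cdMul_eq_zero [SMulCommClass F C C] [IsScalarTower F C C]
    (hσσ : ∀ x, σ (σ x) = x)
    (hN : ∀ x : C, σ x * x = N x • (1 : C) ∧ x * σ x = N x • (1 : C))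
    (hNm : ∀ x y, N (x * y) = N x * N y)
    (hdiv : ∀ x y : C, x * y = 0 → x = 0 ∨ y = 0)
    {c : C} (hcN : N c ≠ 0) (hsq : ∀ x : C, x ≠ 0 → N c ≠ (N x) ^ 2)
    {f : C → C → C} (hfN : ∀ a b, N (f a b) = N c * N a * N b)
    {x y : C × C} (hxy : cdMul σ f x y = 0) : x = 0 ∨ y = 0 := by
  have hnorm : ∀ z : C × C, z = 0 ↔ N z.1 = 0 ∧ N z.2 = 0 := fun z => by
    simp only [Prod.ext_iff, Prod.fst_zero, Prod.snd_zero, norm_eq_zero_iff hσσ hN hdiv]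
  obtain ⟨h1, h2⟩ := Prod.ext_iff.mp hxy
  have n1 : N x.1 * N y.1 = N c * N y.2 * N x.2 := by
    rw [← hNm, eq_neg_of_add_eq_zero_left h1, norm_neg hN, hfN]
  have n2 : N y.2 * N x.1 = N x.2 * N y.1 := by
    rw [← hNm, eq_neg_of_add_eq_zero_left h2, norm_neg hN, hNm,
      norm_involution hσσ hN]
  rw [hnorm x, hnorm y]
  rcases mul_eq_zero.mp (show N y.2 * (N x.1 ^ 2 - N c * N x.2 ^ 2) = 0 by
      linear_combination N x.1 * n2 + N x.2 * n1) with hy2 | hx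
  · rw [hy2, mul_zero, zero_mul] at n1
    rw [hy2, zero_mul, eq_comm] at n2
    by_cases hy1 : N y.1 = 0
    · exact Or.inr ⟨hy1, hy2⟩
    · exact Or.inl ⟨(mul_eq_zero.mp n1).resolve_right hy1,
        (mul_eq_zero.mp n2).resolve_right hy1⟩
  · have hx2 := norm_eq_zero_of_sq_norm_eq hN hNm hcN hsq (sub_eq_zero.mp hx)
    refine Or.inl ⟨pow_eq_zero_iff two_ne_zero |>.mp ?_, hx2⟩
    rw [sub_eq_zero.mp hx, hx2]
    ring

end ScalarInvolution

theorem stmt_19_general {F C : Type*} [Field F] [NonAssocRing C] [Module F C]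
    [SMulCommClass F C C] [IsScalarTower F C C]
    (σ : C →ₗ[F] C)
    (hσσ : ∀ x, σ (σ x) = x)
    (N : C → F)
    (hN : ∀ x : C, σ x * x = N x • (1 : C) ∧ x * σ x = N x • (1 : C))
    (hNm : ∀ x y, N (x * y) = N x * N y)
    (hdiv : ∀ x y : C, x * y = 0 → x = 0 ∨ y = 0)
    (c : C)
    (hcN : N c ≠ 0)
    (hsq : ∀ x : C, x ≠ 0 → N c ≠ (N x) ^ 2) :
    (∀ x y : C × C, dMul1 σ c x y = 0 → x = 0 ∨ y = 0) ∧
    (∀ x y : C × C, dMul2 σ c x y = 0 → x = 0 ∨ y = 0) ∧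
    (∀ x y : C × C, dMul3 σ c x y = 0 → x = 0 ∨ y = 0) ∧
    (∀ x y : C × C, dMul4 σ c x y = 0 → x = 0 ∨ y = 0) ∧
    (∀ x y : C × C, dMul5 σ c x y = 0 → x = 0 ∨ y = 0) ∧
    (∀ x y : C × C, dMul6 σ c x y = 0 → x = 0 ∨ y = 0) := by
  rcases subsingleton_or_nontrivial C with hC | hC
  · refine ⟨?_, ?_, ?_, ?_, ?_, ?_⟩ <;> exact fun x _ _ => Or.inl (Subsingleton.elim x 0)
  have hdoubling (f : C → C → C) (hf : ∀ a b, N (f a b) = N c * N a * N b) (x y : C × C) :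
      cdMul σ f x y = 0 → x = 0 ∨ y = 0 :=
    ScalarInvolution.eq_zero_or_eq_zero_of_cdMul_eq_zero hσσ hN hNm hdiv hcN hsq hf
  have hNσ := ScalarInvolution.norm_involution hσσ hN
  refine ⟨hdoubling (fun a b => c * (σ a * b)) ?_, hdoubling (fun a b => σ a * (c * b)) ?_,
    hdoubling (fun a b => (σ a * b) * c) ?_, hdoubling (fun a b => (c * σ a) * b) ?_,
    hdoubling (fun a b => (σ a * c) * b) ?_, hdoubling (fun a b => σ a * (b * c)) ?_⟩ <;>
    intro a b <;> simp only [hNm, hNσ] <;> ring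

/-- Let `C` be a unital (possibly nonassociative) `F`-algebra with an `F`-linear scalar
involution `σ` whose norm `N` (with `σ(x)x = xσ(x) = N(x)·1`) is multiplicative, and
suppose `C` is flexible and has no zero divisors. If `c ∈ C \ F·1` has `N(c) ≠ 0` and
`N(c)` is not the square of the norm of any nonzero element, then all six generalized
Cayley–Dickson doublings of `C` by `c` have no zero divisors, i.e. are division
algebras. -/
theorem stmt_19 {F C : Type*} [Field F] [NonAssocRing C] [Module F C]
    [SMulCommClass F C C] [IsScalarTower F C C]
    (σ : C →ₗ[F] C)
    (hσσ : ∀ x, σ (σ x) = x) (hσ1 : σ 1 = 1) (hσm : ∀ x y, σ (x * y) = σ y * σ x)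
    (N : C → F)
    (hN : ∀ x : C, σ x * x = N x • (1 : C) ∧ x * σ x = N x • (1 : C))
    (hNm : ∀ x y, N (x * y) = N x * N y)
    (hflex : ∀ x y : C, (x * y) * x = x * (y * x))
    (hdiv : ∀ x y : C, x * y = 0 → x = 0 ∨ y = 0)
    (c : C) (hc1 : ∀ t : F, c ≠ t • (1 : C))
    (hcN : N c ≠ 0)
    (hsq : ∀ x : C, x ≠ 0 → N c ≠ (N x) ^ 2) :
    (∀ x y : C × C, dMul1 σ c x y = 0 → x = 0 ∨ y = 0) ∧
    (∀ x y : C × C, dMul2 σ c x y = 0 → x = 0 ∨ y = 0) ∧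
    (∀ x y : C × C, dMul3 σ c x y = 0 → x = 0 ∨ y = 0) ∧
    (∀ x y : C × C, dMul4 σ c x y = 0 → x = 0 ∨ y = 0) ∧
    (∀ x y : C × C, dMul5 σ c x y = 0 → x = 0 ∨ y = 0) ∧
    (∀ x y : C × C, dMul6 σ c x y = 0 → x = 0 ∨ y = 0) :=
  stmt_19_general σ hσσ N hN hNm hdiv c hcN hsq
end
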